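/- arXiv:1810.02507 — 2 statements merged into one kernel-verified Lean document; each statement's English description precedes it below -/
import Mathlib

section
/- Let p ≥ 13 be a prime and let H be a subgroup of SL₂(𝔽_p) that acts transitively on the set of nonzero vectors of 𝔽_p² (under matrix-vector multiplication). Then H = SL₂(𝔽_p). -/
open Matrix

variable {p : ℕ} [Fact p.Prime]

abbrev F (p : ℕ) := ZMod p
abbrev G (p : ℕ) := Matrix.SpecialLinearGroup (Fin 2) (ZMod p)

namespace SLaux

lemma mulVec_eq (A : Matrix (Fin 2) (Fin 2) (F p)) (v : Fin 2 → F p) :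
    A.mulVec v = ![A 0 0 * v 0 + A 0 1 * v 1, A 1 0 * v 0 + A 1 1 * v 1] := by
  funext i
  fin_cases i <;> simp [Matrix.mulVec, dotProduct, Fin.sum_univ_two]

lemma ker_of_det_eq_zero (A : Matrix (Fin 2) (Fin 2) (F p)) (h : A.det = 0) :
    ∃ v : Fin 2 → F p, v ≠ 0 ∧ A.mulVec v = 0 := by
  rw [Matrix.det_fin_two] at h
  by_cases h1 : A 0 0 = 0 ∧ A 0 1 = 0 ∧ A 1 0 = 0 ∧ A 1 1 = 0
  · exact ⟨![1, 0], by
      intro hv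
      have := congrFun hv 0
      simp at this, by
      rw [mulVec_eq]
      funext i; fin_cases i <;> simp [h1.1, h1.2.1, h1.2.2.1, h1.2.2.2]⟩
  · by_cases h2 : A 0 0 = 0 ∧ A 0 1 = 0
    · refine ⟨![A 1 1, -(A 1 0)], ?_, ?_⟩
      · intro hv
        have h3 := congrFun hv 0
        have h4 := congrFun hv 1
        simp at h3 h4
        exact h1 ⟨h2.1, h2.2, by simpa using h4, h3⟩
      · rw [mulVec_eq]
        funext i; fin_cases i <;> simp [h2.1, h2.2] <;> ring
    · refine ⟨![A 0 1, -(A 0 0)], ?_, ?_⟩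
      · intro hv
        have h3 := congrFun hv 0
        have h4 := congrFun hv 1
        simp at h3 h4
        exact h2 ⟨by simpa using h4, h3⟩
      · rw [mulVec_eq]
        funext i; fin_cases i <;> simp
        · ring
        · linear_combination -h

end SLaux


namespace SLaux2
open Matrix.SpecialLinearGroup

lemma neg_one_ne_one (hp2 : (2 : F p) ≠ 0) : (-1 : G p) ≠ 1 := by
  intro h
  have h2 := congrArg (fun g : G p => (g : Matrix (Fin 2) (Fin 2) (F p)) 0 0) h
  simp only [Matrix.SpecialLinearGroup.coe_neg, Matrix.SpecialLinearGroup.coe_one] at h2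
  simp at h2
  exact hp2 (by linear_combination -h2)

lemma sq_eq_one (hp2 : (2 : F p) ≠ 0) (g : G p) (h : g * g = 1) : g = 1 ∨ g = -1 := by
  have hA : ((g : Matrix (Fin 2) (Fin 2) (F p)) * g) = 1 := by
    have := congrArg (fun x : G p => (x : Matrix (Fin 2) (Fin 2) (F p))) h
    simpa using this
  have hdet : (g : Matrix (Fin 2) (Fin 2) (F p)).det = 1 := g.prop
  set A := (g : Matrix (Fin 2) (Fin 2) (F p)) with hAdef
  have e00 : (A * A) 0 0 = (1 : Matrix (Fin 2) (Fin 2) (F p)) 0 0 := by rw [hA]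
  have e01 : (A * A) 0 1 = (1 : Matrix (Fin 2) (Fin 2) (F p)) 0 1 := by rw [hA]
  have e10 : (A * A) 1 0 = (1 : Matrix (Fin 2) (Fin 2) (F p)) 1 0 := by rw [hA]
  simp only [Matrix.mul_apply, Fin.sum_univ_two, Matrix.one_apply] at e00 e01 e10
  rw [Matrix.det_fin_two] at hdet
  simp at e00 e01 e10
  by_cases had : A 0 0 + A 1 1 = 0
  · exfalso
    apply hp2
    linear_combination -e00 - hdet + A 0 0 * had
  · have hb : A 0 1 = 0 := by
      rcases mul_eq_zero.mp (show A 0 1 * (A 0 0 + A 1 1) = 0 by linear_combination e01) with h' | h'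
      · exact h'
      · exact absurd h' had
    have hc : A 1 0 = 0 := by
      rcases mul_eq_zero.mp (show A 1 0 * (A 0 0 + A 1 1) = 0 by linear_combination e10) with h' | h'
      · exact h'
      · exact absurd h' had
    have ha2 : (A 0 0 - 1) * (A 0 0 + 1) = 0 := by linear_combination e00 - A 1 0 * hb
    rcases mul_eq_zero.mp ha2 with h' | h'
    · left
      have hd : A 1 1 = 1 := by
        have h1 : A 0 0 = 1 := by linear_combination h'
        linear_combination hdet - A 1 1 * h' + A 1 0 * hb
      have h1 : A 0 0 = 1 := by linear_combination h'
      have hMat : A = 1 := by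
        rw [Matrix.eta_fin_two A, hb, hc, hd, h1, Matrix.one_fin_two]
      apply Subtype.ext
      rw [Matrix.SpecialLinearGroup.coe_one, ← hAdef]
      exact hMat
    · right
      have h1 : A 0 0 = -1 := by linear_combination h'
      have hd : A 1 1 = -1 := by linear_combination -hdet + A 1 1 * h' - A 1 0 * hb
      have hMat : A = -1 := by
        rw [Matrix.eta_fin_two A, hb, hc, hd, h1, Matrix.one_fin_two]
        norm_num
      apply Subtype.ext
      rw [Matrix.SpecialLinearGroup.coe_neg, Matrix.SpecialLinearGroup.coe_one, ← hAdef]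
      exact hMat

end SLaux2

namespace SLaux2

lemma commutant {A B : Matrix (Fin 2) (Fin 2) (F p)}
    (hns : ¬(A 0 1 = 0 ∧ A 1 0 = 0 ∧ A 0 0 = A 1 1)) (h : A * B = B * A) :
    ∃ α β : F p, B = α • (1 : Matrix (Fin 2) (Fin 2) (F p)) + β • A := by
  have e00 : (A*B) 0 0 = (B*A) 0 0 := by rw [h]
  have e01 : (A*B) 0 1 = (B*A) 0 1 := by rw [h]
  have e10 : (A*B) 1 0 = (B*A) 1 0 := by rw [h]
  simp only [Matrix.mul_apply, Fin.sum_univ_two] at e00 e01 e10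
  by_cases hb : A 0 1 ≠ 0
  · refine ⟨B 0 0 - (B 0 1 / A 0 1) * A 0 0, B 0 1 / A 0 1, ?_⟩
    ext i j
    fin_cases i <;> fin_cases j <;>
        simp only [Matrix.add_apply, Matrix.smul_apply, Matrix.one_apply, smul_eq_mul] <;>
        norm_num <;>
        field_simp <;>
      first
        | linear_combination e00 | linear_combination -e00
        | linear_combination e01 | linear_combination -e01
        | linear_combination e10 | linear_combination -e10
        | linear_combination e00 + e01 | linear_combination e00 - e01
        | linear_combination -e00 + e01 | linear_combination -e00 - e01
        | linear_combination e00 + e10 | linear_combination e00 - e10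
        | linear_combination -e00 + e10 | linear_combination -e00 - e10
        | ring
  · push_neg at hb
    by_cases hc : A 1 0 ≠ 0
    · refine ⟨B 0 0 - (B 1 0 / A 1 0) * A 0 0, B 1 0 / A 1 0, ?_⟩
      ext i j
      fin_cases i <;> fin_cases j <;>
          simp only [Matrix.add_apply, Matrix.smul_apply, Matrix.one_apply, smul_eq_mul] <;>
          norm_num <;>
          field_simp <;>
        first
          | linear_combination e00 | linear_combination -e00
          | linear_combination e01 | linear_combination -e01
          | linear_combination e10 | linear_combination -e10
          | linear_combination e00 + e01 | linear_combination e00 - e01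
          | linear_combination -e00 + e01 | linear_combination -e00 - e01
          | linear_combination e00 + e10 | linear_combination e00 - e10
          | linear_combination -e00 + e10 | linear_combination -e00 - e10
          | ring
    · push_neg at hc
      have had : A 0 0 - A 1 1 ≠ 0 := by
        intro h'
        exact hns ⟨hb, hc, by linear_combination h'⟩
      refine ⟨B 0 0 - ((B 0 0 - B 1 1)/(A 0 0 - A 1 1)) * A 0 0,
              (B 0 0 - B 1 1)/(A 0 0 - A 1 1), ?_⟩
      have hB01 : B 0 1 = 0 := by
        have h' : B 0 1 * (A 0 0 - A 1 1) = 0 := by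
          linear_combination e01 - B 1 1 * hb + B 0 0 * hb
        rcases mul_eq_zero.mp h' with h'' | h''
        · exact h''
        · exact absurd h'' had
      have hB10 : B 1 0 = 0 := by
        have h' : B 1 0 * (A 0 0 - A 1 1) = 0 := by
          linear_combination -e10 - B 1 1 * hc + B 0 0 * hc
        rcases mul_eq_zero.mp h' with h'' | h''
        · exact h''
        · exact absurd h'' had
      ext i j
      fin_cases i <;> fin_cases j <;>
          simp only [Matrix.add_apply, Matrix.smul_apply, Matrix.one_apply, smul_eq_mul] <;>
          norm_num <;> (try simp [hB01, hB10, hb, hc]) <;> (try field_simp) <;>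
          first
            | rfl
            | ring
            | skip

lemma det_smul_one_add (α β : F p) {A : Matrix (Fin 2) (Fin 2) (F p)} (hdet : A.det = 1) :
    (α • (1 : Matrix (Fin 2) (Fin 2) (F p)) + β • A).det
      = α^2 + α*β*(A 0 0 + A 1 1) + β^2 := by
  rw [Matrix.det_fin_two] at hdet ⊢
  simp only [Matrix.add_apply, Matrix.smul_apply, Matrix.one_apply, smul_eq_mul]
  norm_num
  linear_combination β^2 * hdet

lemma trace_smul_one_add (α β : F p) (A : Matrix (Fin 2) (Fin 2) (F p)) :
    (α • (1 : Matrix (Fin 2) (Fin 2) (F p)) + β • A) 0 0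
      + (α • (1 : Matrix (Fin 2) (Fin 2) (F p)) + β • A) 1 1
      = 2*α + β*(A 0 0 + A 1 1) := by
  simp only [Matrix.add_apply, Matrix.smul_apply, Matrix.one_apply, smul_eq_mul]
  norm_num
  ring

lemma rep_eq (hp2 : (2 : F p) ≠ 0) {t α β : F p} (ht : t^2 - 4 ≠ 0)
    (h1 : 2*α + β*t = t) (h2 : α^2 + t*α*β + β^2 = 1) :
    (α = 0 ∧ β = 1) ∨ (α = t ∧ β = -1) := by
  have key : (t^2 - 4) * (1 - β^2) = 0 := by
    linear_combination (4:F p)*h2 - (2*α + t*β + t)*h1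
  rcases mul_eq_zero.mp key with h' | h'
  · exact absurd h' ht
  · have h'' : (1 - β)*(1 + β) = 0 := by linear_combination h'
    rcases mul_eq_zero.mp h'' with h3 | h3
    · left
      have hβ : β = 1 := by linear_combination -h3
      refine ⟨?_, hβ⟩
      have : 2*α = 0 := by rw [hβ] at h1; linear_combination h1
      rcases mul_eq_zero.mp this with h4 | h4
      · exact absurd h4 hp2
      · exact h4
    · right
      have hβ : β = -1 := by linear_combination h3
      refine ⟨?_, hβ⟩
      have h5 : 2*α = 2*t := by rw [hβ] at h1; linear_combination h1
      have : 2*(α - t) = 0 := by linear_combination h5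
      rcases mul_eq_zero.mp this with h4 | h4
      · exact absurd h4 hp2
      · linear_combination h4

end SLaux2

namespace SLaux2

def e1 (p : ℕ) : Fin 2 → F p := ![1, 0]


lemma coe_inv_mul (g : G p) :
    ((g⁻¹ : G p) : Matrix (Fin 2) (Fin 2) (F p)) * ((g : G p) : Matrix (Fin 2) (Fin 2) (F p)) = 1 := by
  rw [← Matrix.SpecialLinearGroup.coe_mul, inv_mul_cancel, Matrix.SpecialLinearGroup.coe_one]

lemma mulVec_inv_cancel (g : G p) (v : Fin 2 → F p) :
    Matrix.mulVec ((g⁻¹ : G p) : Matrix (Fin 2) (Fin 2) (F p))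
      (Matrix.mulVec ((g : G p) : Matrix (Fin 2) (Fin 2) (F p)) v) = v := by
  rw [Matrix.mulVec_mulVec, coe_inv_mul, Matrix.one_mulVec]

lemma e1_ne_zero (hp2 : (2 : F p) ≠ 0) : e1 p ≠ 0 := by
  intro h
  have := congrFun h 0
  simp [e1] at this

lemma two_ne_zero' (hp13 : 13 ≤ p) : (2 : F p) ≠ 0 := by
  have : ((2 : ℕ) : F p) ≠ 0 := by
    intro h0
    rw [ZMod.natCast_eq_zero_iff] at h0
    have := Nat.le_of_dvd (by norm_num) h0
    omega
  simpa using this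

section withH

variable {H : Subgroup (G p)}

lemma free_all
    (htrans : ∀ u v : Fin 2 → F p, u ≠ 0 → v ≠ 0 →
      ∃ h ∈ H, Matrix.mulVec (h : Matrix (Fin 2) (Fin 2) (F p)) u = v)
    (hfree : ∀ x ∈ H, Matrix.mulVec (x : Matrix (Fin 2) (Fin 2) (F p)) (e1 p) = e1 p → x = 1)
    (hp2 : (2 : F p) ≠ 0) :
    ∀ x ∈ H, ∀ v : Fin 2 → F p, v ≠ 0 →
      Matrix.mulVec (x : Matrix (Fin 2) (Fin 2) (F p)) v = v → x = 1 := by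
  intro x hx v hv hxv
  obtain ⟨g, hg, hge⟩ := htrans (e1 p) v (e1_ne_zero hp2) hv
  have hmem : g⁻¹ * x * g ∈ H := H.mul_mem (H.mul_mem (H.inv_mem hg) hx) hg
  have hfix : Matrix.mulVec ((g⁻¹ * x * g : G p) : Matrix (Fin 2) (Fin 2) (F p)) (e1 p) = e1 p := by
    have hcoe : ((g⁻¹ * x * g : G p) : Matrix (Fin 2) (Fin 2) (F p))
        = (g⁻¹ : G p) * ((x : G p) : Matrix (Fin 2) (Fin 2) (F p)) * (g : G p) := by
      simp [Matrix.SpecialLinearGroup.coe_mul]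
    rw [hcoe]
    rw [← Matrix.mulVec_mulVec, ← Matrix.mulVec_mulVec, hge, hxv, ← hge,
      mulVec_inv_cancel]
  have h1 : g⁻¹ * x * g = 1 := hfree _ hmem hfix
  have : x = g * (g⁻¹ * x * g) * g⁻¹ := by group
  rw [h1] at this
  simpa using this

lemma neg_one_mem
    (htrans : ∀ u v : Fin 2 → F p, u ≠ 0 → v ≠ 0 →
      ∃ h ∈ H, Matrix.mulVec (h : Matrix (Fin 2) (Fin 2) (F p)) u = v)
    (hfree : ∀ x ∈ H, Matrix.mulVec (x : Matrix (Fin 2) (Fin 2) (F p)) (e1 p) = e1 p → x = 1)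
    (hp2 : (2 : F p) ≠ 0) :
    (-1 : G p) ∈ H := by
  have hne : -(e1 p) ≠ 0 := by
    intro h
    apply e1_ne_zero hp2
    have : -(-(e1 p)) = -(0 : Fin 2 → F p) := by rw [h]
    simpa using this
  obtain ⟨g, hg, hge⟩ := htrans (e1 p) (-(e1 p)) (e1_ne_zero hp2) hne
  have hsq : g * g = 1 := by
    apply hfree _ (H.mul_mem hg hg)
    have hcoe : ((g * g : G p) : Matrix (Fin 2) (Fin 2) (F p))
        = ((g : G p) : Matrix (Fin 2) (Fin 2) (F p)) * (g : G p) := by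
      simp [Matrix.SpecialLinearGroup.coe_mul]
    rw [hcoe, ← Matrix.mulVec_mulVec, hge, Matrix.mulVec_neg, hge]
    simp
  rcases sq_eq_one hp2 g hsq with h1 | h1
  · exfalso
    rw [h1] at hge
    simp only [Matrix.SpecialLinearGroup.coe_one, Matrix.one_mulVec] at hge
    have := congrFun hge 0
    simp [e1] at this
    exact hp2 (by linear_combination this)
  · rw [← h1]; exact hg

noncomputable def cardEquiv
    (htrans : ∀ u v : Fin 2 → F p, u ≠ 0 → v ≠ 0 →
      ∃ h ∈ H, Matrix.mulVec (h : Matrix (Fin 2) (Fin 2) (F p)) u = v)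
    (hfree : ∀ x ∈ H, Matrix.mulVec (x : Matrix (Fin 2) (Fin 2) (F p)) (e1 p) = e1 p → x = 1)
    (hp2 : (2 : F p) ≠ 0) :
    H ≃ {v : Fin 2 → F p // v ≠ 0} := by
  apply Equiv.ofBijective
    (fun x : H => (⟨Matrix.mulVec ((x : G p) : Matrix (Fin 2) (Fin 2) (F p)) (e1 p), by
      intro h0
      apply e1_ne_zero hp2
      have : Matrix.mulVec (((x : G p)⁻¹ : G p) : Matrix (Fin 2) (Fin 2) (F p))
          (Matrix.mulVec ((x : G p) : Matrix (Fin 2) (Fin 2) (F p)) (e1 p)) = e1 p :=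
        mulVec_inv_cancel _ _
      rw [h0, Matrix.mulVec_zero] at this
      exact this.symm⟩ : {v : Fin 2 → F p // v ≠ 0}))
  constructor
  · intro x y hxy
    have hxy' : Matrix.mulVec ((x : G p) : Matrix (Fin 2) (Fin 2) (F p)) (e1 p)
        = Matrix.mulVec ((y : G p) : Matrix (Fin 2) (Fin 2) (F p)) (e1 p) := by
      exact congrArg Subtype.val hxy
    have hmem : ((y : G p))⁻¹ * (x : G p) ∈ H := H.mul_mem (H.inv_mem y.2) x.2
    have h1 : ((y : G p))⁻¹ * (x : G p) = 1 := by
      apply hfree _ hmem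
      have hcoe : ((((y:G p))⁻¹ * (x:G p) : G p) : Matrix (Fin 2) (Fin 2) (F p))
          = (((y : G p)⁻¹ : G p) : Matrix (Fin 2) (Fin 2) (F p)) * ((x : G p) : Matrix (Fin 2) (Fin 2) (F p)) := by
        simp [Matrix.SpecialLinearGroup.coe_mul]
      rw [hcoe, ← Matrix.mulVec_mulVec, hxy', mulVec_inv_cancel]
    have : (x : G p) = (y : G p) := by
      have : (y : G p) * (((y:G p))⁻¹ * (x : G p)) = (y:G p) * 1 := by rw [h1]
      simpa [mul_assoc] using this
    exact Subtype.ext this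
  · intro v
    obtain ⟨g, hg, hge⟩ := htrans (e1 p) v.1 (e1_ne_zero hp2) v.2
    exact ⟨⟨g, hg⟩, Subtype.ext hge⟩

lemma card_H
    (htrans : ∀ u v : Fin 2 → F p, u ≠ 0 → v ≠ 0 →
      ∃ h ∈ H, Matrix.mulVec (h : Matrix (Fin 2) (Fin 2) (F p)) u = v)
    (hfree : ∀ x ∈ H, Matrix.mulVec (x : Matrix (Fin 2) (Fin 2) (F p)) (e1 p) = e1 p → x = 1)
    (hp2 : (2 : F p) ≠ 0) :
    Nat.card H = p^2 - 1 := by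
  classical
  rw [Nat.card_eq_of_equiv_fin ((cardEquiv htrans hfree hp2).trans (Fintype.equivFin _))]
  have h1 : Fintype.card {v : Fin 2 → F p // v ≠ 0} = p^2 - 1 := by
    have h2 : Fintype.card {v : Fin 2 → F p // v = 0} = 1 := Fintype.card_subtype_eq (0 : Fin 2 → F p)
    have h3 : Fintype.card (Fin 2 → F p) = p^2 := by
      rw [Fintype.card_fun]
      simp [ZMod.card]
    have := Fintype.card_subtype_compl (fun v : Fin 2 → F p => v = 0)
    rw [h2, h3] at this
    convert this using 2
  exact h1

end withH
end SLaux2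

namespace SLaux2

def e2 (p : ℕ) : Fin 2 → F p := ![0, 1]

lemma e2_ne_zero : e2 p ≠ 0 := by
  intro h
  have := congrFun h 1
  simp [e2] at this

def upperU (t : F p) : G p := ⟨!![1, t; 0, 1], by simp [Matrix.det_fin_two_of]⟩

def lowerL (c : F p) : G p := ⟨!![1, 0; c, 1], by simp [Matrix.det_fin_two_of]⟩

lemma upperU_pow (t : F p) (n : ℕ) : (upperU t)^n = upperU ((n : F p) * t) := by
  induction n with
  | zero =>
    apply Subtype.ext
    show (1 : Matrix (Fin 2) (Fin 2) (F p)) = !![1, ((0:ℕ) : F p) * t; 0, 1]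
    rw [Matrix.one_fin_two]
    norm_num
  | succ n ih =>
    have hs : (upperU t)^(n+1) = (upperU t)^n * upperU t := pow_succ _ _
    rw [hs, ih]
    apply Subtype.ext
    rw [Matrix.SpecialLinearGroup.coe_mul]
    show (!![1, (n:F p)*t; 0,1] : Matrix (Fin 2) (Fin 2) (F p)) * !![1, t; 0, 1]
      = !![1, ((n+1:ℕ) : F p)*t; 0, 1]
    rw [Matrix.mul_fin_two]
    push_cast
    norm_num
    ring

section withH
variable {H : Subgroup (G p)}

lemma upper_mem (x : G p) (hx : x ∈ H) (hx1 : x ≠ 1)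
    (hfix : Matrix.mulVec ((x : G p) : Matrix (Fin 2) (Fin 2) (F p)) (e1 p) = e1 p) :
    ∀ t : F p, upperU t ∈ H := by
  have h00 : (x : Matrix (Fin 2) (Fin 2) (F p)) 0 0 = 1 := by
    have := congrFun hfix 0
    rw [SLaux.mulVec_eq] at this
    simp [e1] at this
    exact this
  have h10 : (x : Matrix (Fin 2) (Fin 2) (F p)) 1 0 = 0 := by
    have := congrFun hfix 1
    rw [SLaux.mulVec_eq] at this
    simp [e1] at this
    exact this
  have hdet := x.prop
  rw [Matrix.det_fin_two, h00, h10] at hdet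
  simp at hdet
  set b := (x : Matrix (Fin 2) (Fin 2) (F p)) 0 1 with hb
  have hxU : x = upperU b := by
    apply Subtype.ext
    rw [Matrix.eta_fin_two (x : Matrix (Fin 2) (Fin 2) (F p)), h00, h10, hdet]
    rfl
  have hbne : b ≠ 0 := by
    intro h0
    apply hx1
    rw [hxU, h0]
    apply Subtype.ext
    simp [upperU, Matrix.one_fin_two]
  intro t
  have hval : (((t/b).val : ℕ) : F p) = t / b := by
    rw [ZMod.natCast_val, ZMod.cast_id]
  have key : x ^ ((t/b).val) = upperU t := by
    rw [hxU, upperU_pow, hval]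
    congr 1
    field_simp
  rw [← key]
  exact pow_mem hx _

lemma lower_mem (hU : ∀ t : F p, upperU t ∈ H) (g : G p) (hg : g ∈ H)
    (hge : Matrix.mulVec ((g : G p) : Matrix (Fin 2) (Fin 2) (F p)) (e1 p) = e2 p) :
    ∀ c : F p, lowerL c ∈ H := by
  intro c
  have h00 : (g : Matrix (Fin 2) (Fin 2) (F p)) 0 0 = 0 := by
    have := congrFun hge 0
    rw [SLaux.mulVec_eq] at this
    simp [e1, e2] at this
    exact this
  have h10 : (g : Matrix (Fin 2) (Fin 2) (F p)) 1 0 = 1 := by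
    have := congrFun hge 1
    rw [SLaux.mulVec_eq] at this
    simp [e1, e2] at this
    exact this
  have hdet := g.prop
  rw [Matrix.det_fin_two, h00, h10] at hdet
  simp at hdet
  have h01 : (g : Matrix (Fin 2) (Fin 2) (F p)) 0 1 = -1 := by linear_combination -hdet
  have key : g * upperU (-c) = lowerL c * g := by
    apply Subtype.ext
    rw [Matrix.SpecialLinearGroup.coe_mul, Matrix.SpecialLinearGroup.coe_mul]
    rw [Matrix.eta_fin_two (g : Matrix (Fin 2) (Fin 2) (F p)), h00, h10, h01]
    show _ * (!![1, -c; 0, 1] : Matrix (Fin 2) (Fin 2) (F p))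
      = (!![1, 0; c, 1] : Matrix (Fin 2) (Fin 2) (F p)) * _
    rw [Matrix.mul_fin_two, Matrix.mul_fin_two]
    norm_num
    try ring
  have : lowerL c = g * upperU (-c) * g⁻¹ := by
    rw [key]
    group
  rw [this]
  exact H.mul_mem (H.mul_mem hg (hU _)) (H.inv_mem hg)

lemma mem_of_c_ne_zero (hU : ∀ t : F p, upperU t ∈ H) (hL : ∀ c : F p, lowerL c ∈ H)
    (M : G p) (hc : (M : Matrix (Fin 2) (Fin 2) (F p)) 1 0 ≠ 0) : M ∈ H := by
  set a := (M : Matrix (Fin 2) (Fin 2) (F p)) 0 0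
  set b := (M : Matrix (Fin 2) (Fin 2) (F p)) 0 1
  set c := (M : Matrix (Fin 2) (Fin 2) (F p)) 1 0
  set d := (M : Matrix (Fin 2) (Fin 2) (F p)) 1 1
  have hdet := M.prop
  rw [Matrix.det_fin_two] at hdet
  have key : M = upperU ((a-1)/c) * lowerL c * upperU ((d-1)/c) := by
    apply Subtype.ext
    rw [Matrix.SpecialLinearGroup.coe_mul, Matrix.SpecialLinearGroup.coe_mul]
    show (M : Matrix (Fin 2) (Fin 2) (F p))
      = !![1, (a-1)/c; 0, 1] * !![1, 0; c, 1] * !![1, (d-1)/c; 0, 1]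
    rw [Matrix.mul_fin_two, Matrix.mul_fin_two]
    ext i j
    fin_cases i <;> fin_cases j <;> norm_num
    · simp only [a]; rw [div_mul_cancel₀ _ hc]; ring
    · field_simp
      linear_combination -hdet
    · rfl
    · rw [← mul_div_assoc, mul_div_cancel_left₀ _ hc]; simp [d]
  rw [key]
  exact H.mul_mem (H.mul_mem (hU _) (hL _)) (hU _)

lemma case_one
    (htrans : ∀ u v : Fin 2 → F p, u ≠ 0 → v ≠ 0 →
      ∃ h ∈ H, Matrix.mulVec (h : Matrix (Fin 2) (Fin 2) (F p)) u = v)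
    (hp2 : (2 : F p) ≠ 0)
    (hex : ∃ x ∈ H, x ≠ 1 ∧ Matrix.mulVec ((x : G p) : Matrix (Fin 2) (Fin 2) (F p)) (e1 p) = e1 p) :
    H = ⊤ := by
  obtain ⟨x, hx, hx1, hfix⟩ := hex
  have hU := upper_mem x hx hx1 hfix
  obtain ⟨g, hg, hge⟩ := htrans (e1 p) (e2 p) (e1_ne_zero hp2) e2_ne_zero
  have hL := lower_mem hU g hg hge
  rw [eq_top_iff]
  intro M _
  by_cases hc : (M : Matrix (Fin 2) (Fin 2) (F p)) 1 0 ≠ 0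
  · exact mem_of_c_ne_zero hU hL M hc
  · push_neg at hc
    have hd : (M : Matrix (Fin 2) (Fin 2) (F p)) 1 1 ≠ 0 := by
      intro h0
      have hdet := M.prop
      rw [Matrix.det_fin_two, hc, h0] at hdet
      simp at hdet
    have hmem : M * lowerL 1 ∈ H := by
      apply mem_of_c_ne_zero hU hL
      have hval : ((M * lowerL 1 : G p) : Matrix (Fin 2) (Fin 2) (F p)) 1 0
          = (M : Matrix (Fin 2) (Fin 2) (F p)) 1 1 := by
        rw [Matrix.SpecialLinearGroup.coe_mul]
        show ((M : Matrix (Fin 2) (Fin 2) (F p)) * ((lowerL 1 : G p) : Matrix (Fin 2) (Fin 2) (F p))) 1 0 = _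
        simp [lowerL, Matrix.mul_apply, Fin.sum_univ_two, hc]
      rw [hval]
      exact hd
    have : M = (M * lowerL 1) * (lowerL 1)⁻¹ := by group
    rw [this]
    exact H.mul_mem hmem (H.inv_mem (hL 1))

end withH
end SLaux2

namespace SLaux2

def Ax {p : ℕ} [Fact p.Prime] (H : Subgroup (G p)) (x : G p) : Subgroup (G p) :=
  H ⊓ Subgroup.centralizer {x}

lemma mem_Ax_iff {H : Subgroup (G p)} {x y : G p} :
    y ∈ Ax H x ↔ y ∈ H ∧ x * y = y * x := by
  rw [Ax, Subgroup.mem_inf, Subgroup.mem_centralizer_singleton_iff]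
  exact and_congr Iff.rfl eq_comm

lemma coe_commute {x y : G p} (h : x * y = y * x) :
    ((x : G p) : Matrix (Fin 2) (Fin 2) (F p)) * ((y : G p) : Matrix (Fin 2) (Fin 2) (F p))
      = ((y : G p) : Matrix (Fin 2) (Fin 2) (F p)) * ((x : G p) : Matrix (Fin 2) (Fin 2) (F p)) := by
  have := congrArg (fun z : G p => (z : Matrix (Fin 2) (Fin 2) (F p))) h
  simpa [Matrix.SpecialLinearGroup.coe_mul] using this

lemma group_commute_of_coe {x y : G p}
    (h : ((x : G p) : Matrix (Fin 2) (Fin 2) (F p)) * ((y : G p) : Matrix (Fin 2) (Fin 2) (F p))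
      = ((y : G p) : Matrix (Fin 2) (Fin 2) (F p)) * ((x : G p) : Matrix (Fin 2) (Fin 2) (F p))) :
    x * y = y * x := by
  apply Subtype.ext
  rw [Matrix.SpecialLinearGroup.coe_mul, Matrix.SpecialLinearGroup.coe_mul]
  exact h

lemma nonscalar_of_ne (hp2 : (2 : F p) ≠ 0) (x : G p) (hx1 : x ≠ 1) (hxm1 : x ≠ -1) :
    ¬(((x : G p) : Matrix (Fin 2) (Fin 2) (F p)) 0 1 = 0
      ∧ ((x : G p) : Matrix (Fin 2) (Fin 2) (F p)) 1 0 = 0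
      ∧ ((x : G p) : Matrix (Fin 2) (Fin 2) (F p)) 0 0 = ((x : G p) : Matrix (Fin 2) (Fin 2) (F p)) 1 1) := by
  rintro ⟨hb, hc, had⟩
  have hdet := x.prop
  rw [Matrix.det_fin_two, hb, hc, ← had] at hdet
  have h2 : (((x : G p) : Matrix (Fin 2) (Fin 2) (F p)) 0 0 - 1)
      * (((x : G p) : Matrix (Fin 2) (Fin 2) (F p)) 0 0 + 1) = 0 := by
    linear_combination hdet
  rcases mul_eq_zero.mp h2 with h' | h'
  · apply hx1
    have h1 : ((x : G p) : Matrix (Fin 2) (Fin 2) (F p)) 0 0 = 1 := by linear_combination h'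
    apply Subtype.ext
    rw [Matrix.eta_fin_two ((x : G p) : Matrix (Fin 2) (Fin 2) (F p)), hb, hc, ← had, h1,
      Matrix.SpecialLinearGroup.coe_one, Matrix.one_fin_two]
  · apply hxm1
    have h1 : ((x : G p) : Matrix (Fin 2) (Fin 2) (F p)) 0 0 = -1 := by linear_combination h'
    apply Subtype.ext
    rw [Matrix.eta_fin_two ((x : G p) : Matrix (Fin 2) (Fin 2) (F p)), hb, hc, ← had, h1,
      Matrix.SpecialLinearGroup.coe_neg, Matrix.SpecialLinearGroup.coe_one, Matrix.one_fin_two]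
    norm_num

lemma rep_of_commute (hp2 : (2 : F p) ≠ 0) {x y : G p} (hx1 : x ≠ 1) (hxm1 : x ≠ -1)
    (h : x * y = y * x) :
    ∃ α β : F p, ((y : G p) : Matrix (Fin 2) (Fin 2) (F p))
      = α • (1 : Matrix (Fin 2) (Fin 2) (F p)) + β • ((x : G p) : Matrix (Fin 2) (Fin 2) (F p)) :=
  commutant (nonscalar_of_ne hp2 x hx1 hxm1) (coe_commute h)

lemma commute_trans (hp2 : (2 : F p) ≠ 0) {x y z : G p} (hx1 : x ≠ 1) (hxm1 : x ≠ -1)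
    (hxy : x * y = y * x) (hxz : x * z = z * x) : y * z = z * y := by
  obtain ⟨α, β, hy⟩ := rep_of_commute hp2 hx1 hxm1 hxy
  obtain ⟨γ, δ, hz⟩ := rep_of_commute hp2 hx1 hxm1 hxz
  apply group_commute_of_coe
  rw [hy, hz]
  set X := ((x : G p) : Matrix (Fin 2) (Fin 2) (F p))
  simp only [add_mul, mul_add, smul_mul_assoc, Matrix.mul_smul, mul_one, one_mul,
    smul_smul, Matrix.one_mul, Matrix.mul_one]
  rw [mul_comm γ α, mul_comm δ α, mul_comm γ β, mul_comm δ β]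
  abel

section withAll
variable {H : Subgroup (G p)}
  (htrans : ∀ u v : Fin 2 → F p, u ≠ 0 → v ≠ 0 →
      ∃ h ∈ H, Matrix.mulVec (h : Matrix (Fin 2) (Fin 2) (F p)) u = v)
  (hfree : ∀ x ∈ H, Matrix.mulVec ((x : G p) : Matrix (Fin 2) (Fin 2) (F p)) (e1 p) = e1 p → x = 1)
  (hp2 : (2 : F p) ≠ 0)

include htrans hfree hp2 in
lemma eq_one_of_trace_two {x : G p} (hx : x ∈ H)
    (ht : ((x : G p) : Matrix (Fin 2) (Fin 2) (F p)) 0 0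
        + ((x : G p) : Matrix (Fin 2) (Fin 2) (F p)) 1 1 = 2) : x = 1 := by
  set A := ((x : G p) : Matrix (Fin 2) (Fin 2) (F p)) with hA
  have hdet := x.prop
  rw [Matrix.det_fin_two] at hdet
  have hdet0 : (A - 1).det = 0 := by
    rw [Matrix.det_fin_two]
    simp only [Matrix.sub_apply, Matrix.one_apply]
    norm_num
    linear_combination hdet - ht
  obtain ⟨v, hv, hker⟩ := SLaux.ker_of_det_eq_zero _ hdet0
  have hfix : Matrix.mulVec A v = v := by
    rw [Matrix.sub_mulVec, Matrix.one_mulVec] at hker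
    have := sub_eq_zero.mp hker
    exact this
  exact free_all htrans hfree hp2 x hx v hv hfix

include htrans hfree hp2 in
lemma trace_sq_ne {x : G p} (hx : x ∈ H) (hx1 : x ≠ 1) (hxm1 : x ≠ -1) :
    (((x : G p) : Matrix (Fin 2) (Fin 2) (F p)) 0 0
      + ((x : G p) : Matrix (Fin 2) (Fin 2) (F p)) 1 1)^2 - 4 ≠ 0 := by
  set t := ((x : G p) : Matrix (Fin 2) (Fin 2) (F p)) 0 0
      + ((x : G p) : Matrix (Fin 2) (Fin 2) (F p)) 1 1 with hts
  intro hsq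
  have h2 : (t - 2) * (t + 2) = 0 := by linear_combination hsq
  rcases mul_eq_zero.mp h2 with h' | h'
  · exact hx1 (eq_one_of_trace_two htrans hfree hp2 hx (by linear_combination h'))
  · apply hxm1
    have hneg : (-x : G p) ∈ H := by
      have : (-x : G p) = (-1) * x := by rw [neg_one_mul]
      rw [this]
      exact H.mul_mem (neg_one_mem htrans hfree hp2) hx
    have htneg : ((-x : G p) : Matrix (Fin 2) (Fin 2) (F p)) 0 0
        + ((-x : G p) : Matrix (Fin 2) (Fin 2) (F p)) 1 1 = 2 := by
      rw [Matrix.SpecialLinearGroup.coe_neg]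
      simp only [Matrix.neg_apply]
      linear_combination -h'
    have := eq_one_of_trace_two htrans hfree hp2 hneg htneg
    have := congrArg (fun z : G p => -z) this
    simpa using this

end withAll
end SLaux2

namespace SLaux2

lemma conj_coe (g x : G p) :
    ((g * x * g⁻¹ : G p) : Matrix (Fin 2) (Fin 2) (F p))
      = ((g : G p) : Matrix (Fin 2) (Fin 2) (F p)) * ((x : G p) : Matrix (Fin 2) (Fin 2) (F p))
        * ((g⁻¹ : G p) : Matrix (Fin 2) (Fin 2) (F p)) := by
  rw [Matrix.SpecialLinearGroup.coe_mul, Matrix.SpecialLinearGroup.coe_mul]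

lemma trace_conj' (g x : G p) :
    ((g * x * g⁻¹ : G p) : Matrix (Fin 2) (Fin 2) (F p)) 0 0
      + ((g * x * g⁻¹ : G p) : Matrix (Fin 2) (Fin 2) (F p)) 1 1
    = ((x : G p) : Matrix (Fin 2) (Fin 2) (F p)) 0 0
      + ((x : G p) : Matrix (Fin 2) (Fin 2) (F p)) 1 1 := by
  rw [← Matrix.trace_fin_two, ← Matrix.trace_fin_two, conj_coe,
    Matrix.trace_mul_comm, ← mul_assoc, coe_inv_mul, one_mul]

lemma A_eq (hp2 : (2 : F p) ≠ 0) {H : Subgroup (G p)} {x y : G p}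
    (hx1 : x ≠ 1) (hxm1 : x ≠ -1) (hy1 : y ≠ 1) (hym1 : y ≠ -1)
    (hxy : x * y = y * x) : Ax H x = Ax H y := by
  ext z
  rw [mem_Ax_iff, mem_Ax_iff]
  constructor
  · rintro ⟨hz, hcomm⟩
    exact ⟨hz, commute_trans hp2 hx1 hxm1 hxy hcomm⟩
  · rintro ⟨hz, hcomm⟩
    have hyx : y * x = x * y := hxy.symm
    exact ⟨hz, commute_trans hp2 hy1 hym1 hyx hcomm⟩

lemma conj_eq_iff (g a b : G p) : a = b ↔ g⁻¹ * a * g = g⁻¹ * b * g := by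
  constructor
  · intro h; rw [h]
  · intro h
    have := congrArg (fun w => g * w * g⁻¹) h
    simpa [mul_assoc] using this

lemma Ax_conj {H : Subgroup (G p)} {x g : G p} (hg : g ∈ H) (z : G p) :
    z ∈ Ax H (g * x * g⁻¹) ↔ g⁻¹ * z * g ∈ Ax H x := by
  rw [mem_Ax_iff, mem_Ax_iff]
  constructor
  · rintro ⟨hz, hcomm⟩
    refine ⟨H.mul_mem (H.mul_mem (H.inv_mem hg) hz) hg, ?_⟩
    have := congrArg (fun w => g⁻¹ * w * g) hcomm
    simpa [mul_assoc] using this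
  · rintro ⟨hz, hcomm⟩
    have hzH : z ∈ H := by
      have hzw : z = g * (g⁻¹ * z * g) * g⁻¹ := by group
      rw [hzw]
      exact H.mul_mem (H.mul_mem hg hz) (H.inv_mem hg)
    refine ⟨hzH, ?_⟩
    have := congrArg (fun w => g * w * g⁻¹) hcomm
    simpa [mul_assoc] using this

end SLaux2

namespace SLaux2
section withAll
variable {H : Subgroup (G p)}
  (htrans : ∀ u v : Fin 2 → F p, u ≠ 0 → v ≠ 0 →
      ∃ h ∈ H, Matrix.mulVec (h : Matrix (Fin 2) (Fin 2) (F p)) u = v)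
  (hfree : ∀ x ∈ H, Matrix.mulVec ((x : G p) : Matrix (Fin 2) (Fin 2) (F p)) (e1 p) = e1 p → x = 1)
  (hp2 : (2 : F p) ≠ 0)

include htrans hfree hp2 in
lemma conj_dichotomy {x g : G p} (hx : x ∈ H) (hx1 : x ≠ 1) (hxm1 : x ≠ -1)
    (hgN : g ∈ Subgroup.normalizer (Ax H x : Set (G p))) (hgH : g ∈ H) :
    g * x * g⁻¹ = x ∨
    ((g * x * g⁻¹ : G p) : Matrix (Fin 2) (Fin 2) (F p))
      = (((x : G p) : Matrix (Fin 2) (Fin 2) (F p)) 0 0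
          + ((x : G p) : Matrix (Fin 2) (Fin 2) (F p)) 1 1) • (1 : Matrix (Fin 2) (Fin 2) (F p))
        + (-1 : F p) • ((x : G p) : Matrix (Fin 2) (Fin 2) (F p)) := by
  set t := ((x : G p) : Matrix (Fin 2) (Fin 2) (F p)) 0 0
      + ((x : G p) : Matrix (Fin 2) (Fin 2) (F p)) 1 1 with ht
  have hxA : x ∈ Ax H x := mem_Ax_iff.mpr ⟨hx, rfl⟩
  have hyA : g * x * g⁻¹ ∈ Ax H x := by
    rw [Subgroup.mem_normalizer_iff] at hgN
    exact (hgN x).mp hxA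
  obtain ⟨hyH, hycomm⟩ := mem_Ax_iff.mp hyA
  obtain ⟨α, β, hrep⟩ := rep_of_commute hp2 hx1 hxm1 hycomm
  have htr : 2*α + β*t = t := by
    have h1 := trace_conj' g x
    rw [hrep, trace_smul_one_add, ← ht] at h1
    exact h1
  have hdet : α^2 + t*α*β + β^2 = 1 := by
    have h1 := (g * x * g⁻¹).prop
    rw [hrep] at h1
    rw [det_smul_one_add α β x.prop, ← ht] at h1
    linear_combination h1
  have htsq := trace_sq_ne htrans hfree hp2 hx hx1 hxm1
  rw [← ht] at htsq
  rcases rep_eq hp2 htsq htr hdet with ⟨hα, hβ⟩ | ⟨hα, hβ⟩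
  · left
    apply Subtype.ext
    rw [hrep, hα, hβ]
    simp
  · right
    rw [hrep, hα, hβ]

lemma scalar_comb_ne (hp2 : (2 : F p) ≠ 0) {x : G p} (hx1 : x ≠ 1) (hxm1 : x ≠ -1) :
    ((x : G p) : Matrix (Fin 2) (Fin 2) (F p))
      ≠ (((x : G p) : Matrix (Fin 2) (Fin 2) (F p)) 0 0
          + ((x : G p) : Matrix (Fin 2) (Fin 2) (F p)) 1 1) • (1 : Matrix (Fin 2) (Fin 2) (F p))
        + (-1 : F p) • ((x : G p) : Matrix (Fin 2) (Fin 2) (F p)) := by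
  intro h
  apply nonscalar_of_ne hp2 x hx1 hxm1
  have e01 := congrFun (congrFun h 0) 1
  have e10 := congrFun (congrFun h 1) 0
  have e00 := congrFun (congrFun h 0) 0
  simp only [Matrix.add_apply, Matrix.smul_apply, Matrix.one_apply, smul_eq_mul] at e01 e10 e00
  norm_num at e01 e10 e00
  have hb : ((x : G p) : Matrix (Fin 2) (Fin 2) (F p)) 0 1 = 0 := by
    have h2 : (2 : F p) * ((x : G p) : Matrix (Fin 2) (Fin 2) (F p)) 0 1 = 0 := by
      linear_combination e01
    rcases mul_eq_zero.mp h2 with h' | h'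
    · exact absurd h' hp2
    · exact h'
  have hc : ((x : G p) : Matrix (Fin 2) (Fin 2) (F p)) 1 0 = 0 := by
    have h2 : (2 : F p) * ((x : G p) : Matrix (Fin 2) (Fin 2) (F p)) 1 0 = 0 := by
      linear_combination e10
    rcases mul_eq_zero.mp h2 with h' | h'
    · exact absurd h' hp2
    · exact h'
  exact ⟨hb, hc, e00⟩

lemma card_filter_subgroup (K : Subgroup (G p)) [DecidablePred (· ∈ K)] :
    (Finset.univ.filter (· ∈ K)).card = Nat.card K := by
  rw [Nat.card_eq_fintype_card, ← Fintype.card_subtype]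

include htrans hfree hp2 in
lemma card_N_dichotomy {x : G p} (hx : x ∈ H) (hx1 : x ≠ 1) (hxm1 : x ≠ -1) :
    Nat.card (Subgroup.normalizer (Ax H x : Set (G p)) ⊓ H : Subgroup (G p)) = Nat.card (Ax H x)
    ∨ Nat.card (Subgroup.normalizer (Ax H x : Set (G p)) ⊓ H : Subgroup (G p)) = 2 * Nat.card (Ax H x) := by
  classical
  set A := Ax H x with hA
  set N := (Subgroup.normalizer (A : Set (G p)) ⊓ H : Subgroup (G p)) with hN
  have hAleN : A ≤ N := le_inf Subgroup.le_normalizer inf_le_left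
  set 𝒩 : Finset (G p) := Finset.univ.filter (· ∈ N) with h𝒩
  set 𝒜 : Finset (G p) := Finset.univ.filter (· ∈ A) with h𝒜
  have hAfilter : 𝒩.filter (fun g => g * x * g⁻¹ = x) = 𝒜 := by
    ext g
    simp only [h𝒩, h𝒜, Finset.mem_filter, Finset.mem_univ, true_and]
    constructor
    · rintro ⟨hgN, hgx⟩
      rw [hA, mem_Ax_iff]
      refine ⟨(Subgroup.mem_inf.mp hgN).2, ?_⟩
      have := congrArg (fun w => w * g) hgx
      simpa [mul_assoc] using this.symm
    · intro hgA
      refine ⟨hAleN hgA, ?_⟩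
      obtain ⟨_, hcomm⟩ := mem_Ax_iff.mp hgA
      rw [← hcomm]
      group
  by_cases hall : ∀ g ∈ 𝒩, g * x * g⁻¹ = x
  · left
    have : 𝒩 = 𝒜 := by
      rw [← hAfilter]
      rw [Finset.filter_eq_self.mpr hall]
    calc Nat.card N = 𝒩.card := (card_filter_subgroup N).symm
    _ = 𝒜.card := by rw [this]
    _ = Nat.card A := card_filter_subgroup A
  · right
    push_neg at hall
    obtain ⟨g₀, hg₀N, hg₀x⟩ := hall
    have hg₀N' : g₀ ∈ N := (Finset.mem_filter.mp hg₀N).2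
    set ℬ : Finset (G p) := 𝒩.filter (fun g => ¬ g * x * g⁻¹ = x) with hℬ
    have hsplit : 𝒜.card + ℬ.card = 𝒩.card := by
      rw [← hAfilter]
      exact Finset.card_filter_add_card_filter_not _
    have hconj_form : ∀ g ∈ ℬ, ((g * x * g⁻¹ : G p) : Matrix (Fin 2) (Fin 2) (F p))
        = (((x : G p) : Matrix (Fin 2) (Fin 2) (F p)) 0 0
            + ((x : G p) : Matrix (Fin 2) (Fin 2) (F p)) 1 1) • (1 : Matrix (Fin 2) (Fin 2) (F p))
          + (-1 : F p) • ((x : G p) : Matrix (Fin 2) (Fin 2) (F p)) := by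
      intro g hg
      rw [hℬ, Finset.mem_filter] at hg
      obtain ⟨hgN, hgx⟩ := hg
      have : g ∈ N := by
        rw [h𝒩, Finset.mem_filter] at hgN
        exact hgN.2
      rcases conj_dichotomy htrans hfree hp2 hx hx1 hxm1 (Subgroup.mem_inf.mp this).1
        (Subgroup.mem_inf.mp this).2 with h' | h'
      · exact absurd h' hgx
      · exact h'
    have hg₀form := hconj_form g₀ (by
      rw [hℬ, Finset.mem_filter]
      exact ⟨hg₀N, hg₀x⟩)
    have hcard : ℬ.card = 𝒜.card := by
      apply Finset.card_bij (fun g _ => g₀⁻¹ * g)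
      · intro g hg
        rw [h𝒜, Finset.mem_filter]
        refine ⟨Finset.mem_univ _, ?_⟩
        rw [hA, mem_Ax_iff]
        have hgN : g ∈ N := by
          rw [hℬ, Finset.mem_filter, h𝒩, Finset.mem_filter] at hg
          exact hg.1.2
        constructor
        · exact H.mul_mem (H.inv_mem (Subgroup.mem_inf.mp hg₀N').2)
            (Subgroup.mem_inf.mp hgN).2
        · have heq : g * x * g⁻¹ = g₀ * x * g₀⁻¹ := by
            apply Subtype.ext
            rw [hconj_form g hg, hg₀form]
          have h2 : (g₀⁻¹ * g) * x * (g₀⁻¹ * g)⁻¹ = x := by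
            have hstep : (g₀⁻¹ * g) * x * (g₀⁻¹ * g)⁻¹ = g₀⁻¹ * (g * x * g⁻¹) * g₀ := by
              group
            rw [hstep, heq]
            group
          have := congrArg (fun w => w * (g₀⁻¹ * g)) h2
          simpa [mul_assoc] using this.symm
      · intro g1 hg1 g2 hg2 heq
        exact mul_left_cancel heq
      · intro ν hν
        refine ⟨g₀ * ν, ?_, by group⟩
        rw [hℬ, Finset.mem_filter, h𝒩, Finset.mem_filter]
        rw [h𝒜, Finset.mem_filter] at hν
        have hνA : ν ∈ A := hν.2
        have hνN : ν ∈ N := hAleN hνA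
        refine ⟨⟨Finset.mem_univ _, N.mul_mem hg₀N' hνN⟩, ?_⟩
        intro hcon
        apply hg₀x
        obtain ⟨_, hcomm⟩ := mem_Ax_iff.mp hνA
        have hνconj : ν * x * ν⁻¹ = x := by
          rw [← hcomm]
          group
        have : (g₀ * ν) * x * (g₀ * ν)⁻¹ = g₀ * (ν * x * ν⁻¹) * g₀⁻¹ := by
          group
        rw [this, hνconj] at hcon
        exact hcon
    calc Nat.card N = 𝒩.card := (card_filter_subgroup N).symm
    _ = 𝒜.card + ℬ.card := hsplit.symm
    _ = 2 * 𝒜.card := by rw [hcard]; ring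
    _ = 2 * Nat.card A := by rw [card_filter_subgroup A]

end withAll
end SLaux2

namespace SLaux2

lemma ne_neg_self (hp2 : (2 : F p) ≠ 0) (x : G p) : x ≠ -x := by
  intro h
  have hcoe := congrArg (fun z : G p => (z : Matrix (Fin 2) (Fin 2) (F p))) h
  simp only [Matrix.SpecialLinearGroup.coe_neg] at hcoe
  have hz : ∀ i j, ((x : G p) : Matrix (Fin 2) (Fin 2) (F p)) i j = 0 := by
    intro i j
    have := congrFun (congrFun hcoe i) j
    simp only [Matrix.neg_apply] at this
    have h2 : (2 : F p) * ((x : G p) : Matrix (Fin 2) (Fin 2) (F p)) i j = 0 := by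
      linear_combination this
    rcases mul_eq_zero.mp h2 with h' | h'
    · exact absurd h' hp2
    · exact h'
  have hdet := x.prop
  rw [Matrix.det_fin_two, hz 0 0, hz 0 1] at hdet
  simp at hdet

lemma neg_one_mem_Ax {H : Subgroup (G p)} {x : G p} (hneg : (-1 : G p) ∈ H) :
    (-1 : G p) ∈ Ax H x := by
  rw [mem_Ax_iff]
  refine ⟨hneg, ?_⟩
  simp

lemma four_le_card_Ax (hp2 : (2 : F p) ≠ 0) {H : Subgroup (G p)} {x : G p}
    (hx : x ∈ H) (hx1 : x ≠ 1) (hxm1 : x ≠ -1) (hneg : (-1 : G p) ∈ H) :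
    4 ≤ Nat.card (Ax H x) := by
  classical
  rw [← card_filter_subgroup]
  have hsub : ({1, -1, x, -x} : Finset (G p)) ⊆ Finset.univ.filter (· ∈ Ax H x) := by
    intro z hz
    simp only [Finset.mem_insert, Finset.mem_singleton] at hz
    rw [Finset.mem_filter]
    refine ⟨Finset.mem_univ _, ?_⟩
    rcases hz with rfl | rfl | rfl | rfl
    · exact (Ax H x).one_mem
    · exact neg_one_mem_Ax hneg
    · exact mem_Ax_iff.mpr ⟨hx, rfl⟩
    · have : (-x : G p) = (-1) * x := by rw [neg_one_mul]
      rw [this]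
      exact (Ax H x).mul_mem (neg_one_mem_Ax hneg) (mem_Ax_iff.mpr ⟨hx, rfl⟩)
  have hcard : ({1, -1, x, -x} : Finset (G p)).card = 4 := by
    have h12 : (1 : G p) ≠ -1 := (neg_one_ne_one hp2).symm
    have h13 : (1 : G p) ≠ x := fun h => hx1 h.symm
    have h14 : (1 : G p) ≠ -x := by
      intro h
      exact hxm1 (by rw [neg_eq_iff_eq_neg.mp h.symm])
    have h23 : (-1 : G p) ≠ x := fun h => hxm1 h.symm
    have h24 : (-1 : G p) ≠ -x := by
      intro h
      exact hx1 (neg_injective h).symm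
    have h34 : x ≠ -x := ne_neg_self hp2 x
    rw [Finset.card_insert_of_notMem (by simp [h12, h13, h14]),
      Finset.card_insert_of_notMem (by simp [h23, h24]),
      Finset.card_insert_of_notMem (by simp [h34]),
      Finset.card_singleton]
  calc 4 = ({1, -1, x, -x} : Finset (G p)).card := hcard.symm
  _ ≤ _ := Finset.card_le_card hsub

lemma two_dvd_card_Ax (hp2 : (2 : F p) ≠ 0) {H : Subgroup (G p)} {x : G p}
    (hneg : (-1 : G p) ∈ H) : 2 ∣ Nat.card (Ax H x) := by
  have hle : Subgroup.zpowers (-1 : G p) ≤ Ax H x :=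
    (Subgroup.zpowers_le).mpr (neg_one_mem_Ax hneg)
  have hcard : Nat.card (Subgroup.zpowers (-1 : G p)) = 2 := by
    rw [Nat.card_zpowers]
    apply orderOf_eq_prime
    · simp
    · exact neg_one_ne_one hp2
  have hdvd := Subgroup.card_dvd_of_le hle
  rwa [hcard] at hdvd

lemma card_quadratic_roots (b c : F p) :
    (Finset.univ.filter (fun α : F p => α^2 + b*α + c = 0)).card ≤ 2 := by
  by_contra hcon
  push_neg at hcon
  obtain ⟨u, v, w, hu, hv, hw, huv, huw, hvw⟩ := Finset.two_lt_card_iff.mp hcon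
  rw [Finset.mem_filter] at hu hv hw
  have hu' := hu.2; have hv' := hv.2; have hw' := hw.2
  have huv2 : (u - v) * (u + v + b) = 0 := by linear_combination hu' - hv'
  have huw2 : (u - w) * (u + w + b) = 0 := by linear_combination hu' - hw'
  have h1 : u + v + b = 0 := by
    rcases mul_eq_zero.mp huv2 with h' | h'
    · exact absurd (by linear_combination h') huv
    · exact h'
  have h2 : u + w + b = 0 := by
    rcases mul_eq_zero.mp huw2 with h' | h'
    · exact absurd (by linear_combination h') huw
    · exact h'
  exact hvw (by linear_combination h1 - h2)

def Conic (p : ℕ) [Fact p.Prime] (t : F p) : Finset (F p × F p) :=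
  Finset.univ.filter (fun q => q.1^2 + q.1*q.2*t + q.2^2 = 1)

lemma card_conic (t : F p) : (Conic p t).card ≤ 2 * p := by
  classical
  have hfiber : ∀ a ∈ (Conic p t).image Prod.snd,
      ((Conic p t).filter (fun q => Prod.snd q = a)).card ≤ 2 := by
    intro a _
    have hinj : Set.InjOn Prod.fst ((((Conic p t).filter (fun q => Prod.snd q = a))) : Set (F p × F p)) := by
      intro q1 hq1 q2 hq2 hfst
      simp only [Finset.coe_filter, Set.mem_setOf_eq] at hq1 hq2
      exact Prod.ext hfst (hq1.2.trans hq2.2.symm)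
    calc ((Conic p t).filter (fun q => Prod.snd q = a)).card
        = (((Conic p t).filter (fun q => Prod.snd q = a)).image Prod.fst).card :=
          (Finset.card_image_of_injOn hinj).symm
    _ ≤ (Finset.univ.filter (fun α : F p => α^2 + (a*t)*α + (a^2 - 1) = 0)).card := by
          apply Finset.card_le_card
          intro α hα
          rw [Finset.mem_image] at hα
          obtain ⟨q, hq, rfl⟩ := hα
          rw [Finset.mem_filter] at hq ⊢
          obtain ⟨hqC, hqa⟩ := hq
          rw [Conic, Finset.mem_filter] at hqC
          refine ⟨Finset.mem_univ _, ?_⟩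
          rw [← hqa] at *
          linear_combination hqC.2
    _ ≤ 2 := card_quadratic_roots _ _
  calc (Conic p t).card ≤ 2 * ((Conic p t).image Prod.snd).card :=
        Finset.card_le_mul_card_image _ 2 hfiber
  _ ≤ 2 * p := by
      have := Finset.card_le_univ ((Conic p t).image Prod.snd)
      have hcard : Fintype.card (F p) = p := ZMod.card p
      rw [hcard] at this
      omega

lemma card_Ax_le (hp2 : (2 : F p) ≠ 0) {H : Subgroup (G p)} {x : G p}
    (hx1 : x ≠ 1) (hxm1 : x ≠ -1) :
    Nat.card (Ax H x) ≤ 2 * p := by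
  classical
  set t := ((x : G p) : Matrix (Fin 2) (Fin 2) (F p)) 0 0
      + ((x : G p) : Matrix (Fin 2) (Fin 2) (F p)) 1 1 with ht
  have hrep : ∀ y : ↥(Ax H x), ∃ α β : F p, ((y.1 : G p) : Matrix (Fin 2) (Fin 2) (F p))
      = α • (1 : Matrix (Fin 2) (Fin 2) (F p)) + β • ((x : G p) : Matrix (Fin 2) (Fin 2) (F p)) :=
    fun y => rep_of_commute hp2 hx1 hxm1 (mem_Ax_iff.mp y.2).2
  set pf : ↥(Ax H x) → F p × F p :=
    fun y => (Classical.choose (hrep y), Classical.choose (Classical.choose_spec (hrep y))) with hpf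
  have hspec : ∀ y : ↥(Ax H x), ((y.1 : G p) : Matrix (Fin 2) (Fin 2) (F p))
      = (pf y).1 • (1 : Matrix (Fin 2) (Fin 2) (F p))
        + (pf y).2 • ((x : G p) : Matrix (Fin 2) (Fin 2) (F p)) :=
    fun y => Classical.choose_spec (Classical.choose_spec (hrep y))
  have hmem : ∀ y : ↥(Ax H x), pf y ∈ Conic p t := by
    intro y
    rw [Conic, Finset.mem_filter]
    refine ⟨Finset.mem_univ _, ?_⟩
    have hdet := (y.1 : G p).prop
    rw [hspec y, det_smul_one_add _ _ x.prop, ← ht] at hdet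
    linear_combination hdet
  have hinj : Function.Injective (fun y : ↥(Ax H x) => (⟨pf y, hmem y⟩ : {q // q ∈ Conic p t})) := by
    intro y z hyz
    have hpq : pf y = pf z := congrArg Subtype.val hyz
    have h := hspec y
    rw [hpq] at h
    have h2 : ((y.1 : G p) : Matrix (Fin 2) (Fin 2) (F p)) = ((z.1 : G p) : Matrix (Fin 2) (Fin 2) (F p)) := by
      rw [h, hspec z]
    apply Subtype.ext
    apply Subtype.ext
    exact h2
  calc Nat.card (Ax H x) = Fintype.card ↥(Ax H x) := Nat.card_eq_fintype_card
  _ ≤ Fintype.card {q // q ∈ Conic p t} := Fintype.card_le_of_injective _ hinj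
  _ = (Conic p t).card := Fintype.card_coe _
  _ ≤ 2 * p := card_conic t

end SLaux2

namespace SLaux2

lemma conj_eq_one_iff' (g x : G p) : g * x * g⁻¹ = 1 ↔ x = 1 := by
  constructor
  · intro h
    have := congrArg (fun w => g⁻¹ * w * g) h
    simpa [mul_assoc] using this
  · intro h
    rw [h]
    group

lemma neg_one_central (g : G p) : g * (-1) * g⁻¹ = -1 := by
  have : g * (-1) * g⁻¹ = -(g * g⁻¹) := by
    rw [mul_neg_one, neg_mul]
  rw [this]
  simp

lemma conj_eq_neg_one_iff (g x : G p) : g * x * g⁻¹ = -1 ↔ x = -1 := by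
  constructor
  · intro h
    have := congrArg (fun w => g⁻¹ * w * g) h
    simpa [mul_assoc] using this
  · intro h
    rw [h]
    exact neg_one_central g

def Rel (H : Subgroup (G p)) (x y : G p) : Prop :=
  ∃ g ∈ H, (g * x * g⁻¹) * y = y * (g * x * g⁻¹)

lemma Rel_refl {H : Subgroup (G p)} (x : G p) : Rel H x x := by
  refine ⟨1, H.one_mem, ?_⟩
  simp

lemma Rel_symm {H : Subgroup (G p)} {x y : G p} (h : Rel H x y) : Rel H y x := by
  obtain ⟨g, hg, hcomm⟩ := h
  refine ⟨g⁻¹, H.inv_mem hg, ?_⟩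
  rw [inv_inv]
  have := congrArg (fun w => g⁻¹ * w * g) hcomm
  simpa [mul_assoc] using this.symm

lemma Rel_trans (hp2 : (2 : F p) ≠ 0) {H : Subgroup (G p)} {x y z : G p}
    (hy1 : y ≠ 1) (hym1 : y ≠ -1) (hz1 : z ≠ 1) (hzm1 : z ≠ -1)
    (hxH : x ∈ H) (hyH : y ∈ H)
    (hxy : Rel H x y) (hyz : Rel H y z) : Rel H x z := by
  obtain ⟨g₁, hg₁, hc₁⟩ := hxy
  obtain ⟨g₂, hg₂, hc₂⟩ := hyz
  set u := g₁ * x * g₁⁻¹ with hu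
  set v := g₂ * y * g₂⁻¹ with hv
  have hv1 : v ≠ 1 := fun h => hy1 ((conj_eq_one_iff' g₂ y).mp h)
  have hvm1 : v ≠ -1 := fun h => hym1 ((conj_eq_neg_one_iff g₂ y).mp h)
  have huA : u ∈ Ax H y := mem_Ax_iff.mpr ⟨H.mul_mem (H.mul_mem hg₁ hxH) (H.inv_mem hg₁),
    hc₁.symm⟩
  have hconj : g₂ * u * g₂⁻¹ ∈ Ax H v := by
    rw [hv, Ax_conj hg₂]
    have : g₂⁻¹ * (g₂ * u * g₂⁻¹) * g₂ = u := by group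
    rw [this]
    exact huA
  have hAvz : Ax H v = Ax H z := A_eq hp2 hv1 hvm1 hz1 hzm1 hc₂
  rw [hAvz] at hconj
  obtain ⟨_, hcomm⟩ := mem_Ax_iff.mp hconj
  refine ⟨g₂ * g₁, H.mul_mem hg₂ hg₁, ?_⟩
  have hw : (g₂ * g₁) * x * (g₂ * g₁)⁻¹ = g₂ * u * g₂⁻¹ := by
    rw [hu]
    group
  rw [hw]
  exact hcomm.symm

end SLaux2

namespace SLaux2
section withAll
variable {H : Subgroup (G p)}
  (htrans : ∀ u v : Fin 2 → F p, u ≠ 0 → v ≠ 0 →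
      ∃ h ∈ H, Matrix.mulVec (h : Matrix (Fin 2) (Fin 2) (F p)) u = v)
  (hfree : ∀ x ∈ H, Matrix.mulVec ((x : G p) : Matrix (Fin 2) (Fin 2) (F p)) (e1 p) = e1 p → x = 1)
  (hp2 : (2 : F p) ≠ 0)

open scoped Classical in
include htrans hfree hp2 in
lemma class_card {x₀ : G p} (hx : x₀ ∈ H) (hx1 : x₀ ≠ 1) (hxm1 : x₀ ≠ -1) :
    ((Finset.univ.filter (fun w : G p => w ∈ H ∧ w ≠ 1 ∧ w ≠ -1)).filter (Rel H x₀)).card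
        * Nat.card (Subgroup.normalizer (Ax H x₀ : Set (G p)) ⊓ H : Subgroup (G p))
      = Nat.card H * (Nat.card (Ax H x₀) - 2) := by
  classical
  have hneg : (-1 : G p) ∈ H := neg_one_mem htrans hfree hp2
  set S : Finset (G p) := Finset.univ.filter (fun w : G p => w ∈ H ∧ w ≠ 1 ∧ w ≠ -1) with hS
  set A := Ax H x₀ with hA
  set N := (Subgroup.normalizer (A : Set (G p)) ⊓ H : Subgroup (G p)) with hN
  set c : Finset (G p) := S.filter (Rel H x₀) with hc
  set 𝒜 : Finset (G p) := Finset.univ.filter (· ∈ A) with h𝒜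
  set ℋ : Finset (G p) := Finset.univ.filter (· ∈ H) with hℋ
  set 𝒩 : Finset (G p) := Finset.univ.filter (· ∈ N) with h𝒩
  set 𝒜' : Finset (G p) := 𝒜 \ {1, -1} with h𝒜'
  have h𝒜'mem : ∀ w, w ∈ 𝒜' ↔ (w ∈ A ∧ w ≠ 1 ∧ w ≠ -1) := by
    intro w
    rw [h𝒜', Finset.mem_sdiff, h𝒜, Finset.mem_filter]
    simp only [Finset.mem_insert, Finset.mem_singleton, Finset.mem_univ, true_and]
    tauto
  have h𝒜'card : 𝒜'.card = Nat.card A - 2 := by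
    rw [h𝒜', Finset.card_sdiff_of_subset]
    · congr 1
      · exact card_filter_subgroup A
      · rw [Finset.card_insert_of_notMem (by simp [neg_one_ne_one hp2]; exact fun h => (neg_one_ne_one hp2) h.symm),
          Finset.card_singleton]
    · intro w hw
      simp only [Finset.mem_insert, Finset.mem_singleton] at hw
      rw [h𝒜, Finset.mem_filter]
      refine ⟨Finset.mem_univ _, ?_⟩
      rcases hw with rfl | rfl
      · exact A.one_mem
      · exact neg_one_mem_Ax hneg
  set X : Finset (G p × G p) := ℋ ×ˢ 𝒜' with hX
  have hXcard : X.card = Nat.card H * (Nat.card A - 2) := by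
    rw [hX, Finset.card_product, h𝒜'card, card_filter_subgroup H]
  have hmapsto : ∀ q ∈ X, q.1 * q.2 * q.1⁻¹ ∈ c := by
    rintro ⟨g, y⟩ hq
    rw [hX, Finset.mem_product] at hq
    obtain ⟨hgH, hy⟩ := hq
    rw [hℋ, Finset.mem_filter] at hgH
    have hgH := hgH.2
    rw [h𝒜'mem] at hy
    obtain ⟨hyA, hy1, hym1⟩ := hy
    obtain ⟨hyH, hycomm⟩ := mem_Ax_iff.mp hyA
    rw [hc, Finset.mem_filter, hS, Finset.mem_filter]
    refine ⟨⟨Finset.mem_univ _, H.mul_mem (H.mul_mem hgH hyH) (H.inv_mem hgH),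
      fun h => hy1 ((conj_eq_one_iff' g y).mp h),
      fun h => hym1 ((conj_eq_neg_one_iff g y).mp h)⟩, ?_⟩
    refine ⟨g, hgH, ?_⟩
    have := congrArg (fun w => g * w * g⁻¹) hycomm
    simpa [mul_assoc] using this
  have hfibers : ∀ z ∈ c, (X.filter (fun q => q.1 * q.2 * q.1⁻¹ = z)).card = 𝒩.card := by
    intro z hz
    rw [hc, Finset.mem_filter] at hz
    obtain ⟨hzS, g, hgH, hgcomm⟩ := hz
    rw [hS, Finset.mem_filter] at hzS
    obtain ⟨_, hzH, hz1, hzm1⟩ := hzS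
    set u := g * x₀ * g⁻¹ with hu
    have hu1 : u ≠ 1 := fun h => hx1 ((conj_eq_one_iff' g x₀).mp h)
    have hum1 : u ≠ -1 := fun h => hxm1 ((conj_eq_neg_one_iff g x₀).mp h)
    have huH : u ∈ H := H.mul_mem (H.mul_mem hgH hx) (H.inv_mem hgH)
    -- y₀ := g⁻¹ * z * g ∈ A, noncentral
    set y₀ := g⁻¹ * z * g with hy₀
    have hy₀1 : y₀ ≠ 1 := by
      intro h
      apply hz1
      rw [hy₀] at h
      have : g⁻¹ * z * (g⁻¹)⁻¹ = 1 := by rw [inv_inv]; exact h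
      exact (conj_eq_one_iff' g⁻¹ z).mp this
    have hy₀m1 : y₀ ≠ -1 := by
      intro h
      apply hzm1
      rw [hy₀] at h
      have : g⁻¹ * z * (g⁻¹)⁻¹ = -1 := by rw [inv_inv]; exact h
      exact (conj_eq_neg_one_iff g⁻¹ z).mp this
    have hy₀A : y₀ ∈ A := by
      have hzAu : z ∈ Ax H u := by
        have hAuz : Ax H u = Ax H z := A_eq hp2 hu1 hum1 hz1 hzm1 hgcomm
        rw [hAuz]
        exact mem_Ax_iff.mpr ⟨hzH, rfl⟩
      rw [hu] at hzAu
      rw [hA]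
      exact (Ax_conj hgH z).mp hzAu
    have hy₀H : y₀ ∈ H := H.mul_mem (H.mul_mem (H.inv_mem hgH) hzH) hgH
    have hAy' : ∀ y' : G p, y' ∈ A → y' ≠ 1 → y' ≠ -1 → Ax H y' = A := by
      intro y' hy'A h1 h2
      obtain ⟨_, hcomm⟩ := mem_Ax_iff.mp hy'A
      rw [hA]
      exact A_eq hp2 h1 h2 hx1 hxm1 hcomm.symm
    have hAy₀ : Ax H y₀ = A := hAy' y₀ hy₀A hy₀1 hy₀m1
    have hfib_mem : ∀ q ∈ X.filter (fun q : G p × G p => q.1 * q.2 * q.1⁻¹ = z),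
        q.1 ∈ H ∧ q.2 ∈ A ∧ q.2 ≠ 1 ∧ q.2 ≠ -1 ∧ q.1 * q.2 * q.1⁻¹ = z := by
      rintro ⟨g', y'⟩ hq
      rw [Finset.mem_filter, hX, Finset.mem_product] at hq
      obtain ⟨⟨hg', hy'⟩, hfib⟩ := hq
      rw [hℋ, Finset.mem_filter] at hg'
      rw [h𝒜'mem] at hy'
      exact ⟨hg'.2, hy'.1, hy'.2.1, hy'.2.2, hfib⟩
    have hy'_eq : ∀ (g' y' : G p), g' * y' * g'⁻¹ = z → y' = g'⁻¹ * z * g' := by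
      intro g' y' hfib
      have := congrArg (fun w => g'⁻¹ * w * g') hfib
      simpa [mul_assoc] using this
    have hnu_mem : ∀ (g' y' : G p), g' ∈ H → y' ∈ A → y' ≠ 1 → y' ≠ -1 →
        g' * y' * g'⁻¹ = z → g⁻¹ * g' ∈ N := by
      intro g' y' hg'H hy'A hy'1 hy'm1 hfib
      have hy'eq := hy'_eq g' y' hfib
      have hAy'' : Ax H y' = A := hAy' y' hy'A hy'1 hy'm1
      set ν := g⁻¹ * g' with hν
      have hνH : ν ∈ H := H.mul_mem (H.inv_mem hgH) hg'H
      have hconj_y : ν⁻¹ * y₀ * ν⁻¹⁻¹ = y' := by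
        rw [inv_inv, hy₀, hy'eq, hν]
        group
      have hnorm : ν ∈ Subgroup.normalizer (A : Set (G p)) := by
        rw [Subgroup.mem_normalizer_iff]
        intro b
        have hiff := Ax_conj (H := H) (x := y₀) (g := ν⁻¹) (H.inv_mem hνH) b
        rw [hconj_y, inv_inv, hAy'', hAy₀] at hiff
        exact hiff
      rw [hN, Subgroup.mem_inf]
      exact ⟨hnorm, hνH⟩
    apply Finset.card_bij' (i := fun q (_ : q ∈ X.filter (fun q : G p × G p => q.1 * q.2 * q.1⁻¹ = z)) => g⁻¹ * q.1)
      (j := fun ν (_ : ν ∈ 𝒩) => (g * ν, (g * ν)⁻¹ * z * (g * ν)))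
    · rintro ⟨g', y'⟩ hq
      obtain ⟨hg'H, hy'A, hy'1, hy'm1, hfib⟩ := hfib_mem _ hq
      rw [h𝒩, Finset.mem_filter]
      exact ⟨Finset.mem_univ _, hnu_mem g' y' hg'H hy'A hy'1 hy'm1 hfib⟩
    · intro ν hν
      rw [h𝒩, Finset.mem_filter] at hν
      have hνN := hν.2
      rw [hN, Subgroup.mem_inf] at hνN
      obtain ⟨hνnorm, hνH⟩ := hνN
      rw [Finset.mem_filter, hX, Finset.mem_product]
      have hgνH : g * ν ∈ H := H.mul_mem hgH hνH
      set y'' := (g * ν)⁻¹ * z * (g * ν) with hy''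
      have hy''A : y'' ∈ A := by
        have hb : ν * y'' * ν⁻¹ = y₀ := by
          rw [hy'', hy₀]
          group
        have := (Subgroup.mem_normalizer_iff.mp hνnorm y'').symm
        rw [hb] at this
        exact this.mp hy₀A
      have hy''1 : y'' ≠ 1 := by
        intro h
        apply hz1
        have h2 : (g * ν)⁻¹ * z * ((g * ν)⁻¹)⁻¹ = 1 := by rw [inv_inv]; exact h
        exact (conj_eq_one_iff' (g * ν)⁻¹ z).mp h2
      have hy''m1 : y'' ≠ -1 := by
        intro h
        apply hzm1
        have h2 : (g * ν)⁻¹ * z * ((g * ν)⁻¹)⁻¹ = -1 := by rw [inv_inv]; exact h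
        exact (conj_eq_neg_one_iff (g * ν)⁻¹ z).mp h2
      refine ⟨⟨?_, ?_⟩, ?_⟩
      · rw [hℋ, Finset.mem_filter]
        exact ⟨Finset.mem_univ _, hgνH⟩
      · rw [h𝒜'mem]
        exact ⟨hy''A, hy''1, hy''m1⟩
      · show (g * ν) * y'' * (g * ν)⁻¹ = z
        rw [hy'']
        group
    · rintro ⟨g', y'⟩ hq
      obtain ⟨hg'H, hy'A, hy'1, hy'm1, hfib⟩ := hfib_mem _ hq
      have h1 : g * (g⁻¹ * g') = g' := by group
      have h2 : (g * (g⁻¹ * g'))⁻¹ * z * (g * (g⁻¹ * g')) = y' := by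
        rw [h1]
        exact (hy'_eq g' y' hfib).symm
      exact Prod.ext h1 h2
    · intro ν hν
      show g⁻¹ * (g * ν) = ν
      group
  have hsum := Finset.card_eq_sum_card_fiberwise hmapsto
  have hsum2 : ∑ z ∈ c, (X.filter (fun q : G p × G p => q.1 * q.2 * q.1⁻¹ = z)).card
      = c.card * 𝒩.card := by
    rw [Finset.sum_congr rfl hfibers, Finset.sum_const, smul_eq_mul]
  have hfinal : X.card = c.card * 𝒩.card := by rw [hsum, hsum2]
  calc c.card * Nat.card N = c.card * 𝒩.card := by rw [card_filter_subgroup N]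
  _ = X.card := hfinal.symm
  _ = Nat.card H * (Nat.card A - 2) := hXcard

end withAll
end SLaux2

namespace SLaux2

open scoped Classical in
lemma class_equation (hp2 : (2 : F p) ≠ 0) {H : Subgroup (G p)} :
    (Finset.univ.filter (fun w : G p => w ∈ H ∧ w ≠ 1 ∧ w ≠ -1)).card
      = ∑ t ∈ (Finset.univ.filter (fun w : G p => w ∈ H ∧ w ≠ 1 ∧ w ≠ -1)).image
          (fun x => (Finset.univ.filter (fun w : G p => w ∈ H ∧ w ≠ 1 ∧ w ≠ -1)).filter (Rel H x)),
        t.card := by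
  classical
  set S : Finset (G p) := Finset.univ.filter (fun w : G p => w ∈ H ∧ w ≠ 1 ∧ w ≠ -1) with hS
  set f : G p → Finset (G p) := fun x => S.filter (Rel H x) with hf
  have hSmem : ∀ w, w ∈ S ↔ (w ∈ H ∧ w ≠ 1 ∧ w ≠ -1) := by
    intro w
    rw [hS, Finset.mem_filter]
    simp
  have hmaps : ∀ x ∈ S, f x ∈ S.image f := fun x hx => Finset.mem_image_of_mem f hx
  rw [Finset.card_eq_sum_card_fiberwise hmaps]
  apply Finset.sum_congr rfl
  intro t ht
  rw [Finset.mem_image] at ht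
  obtain ⟨x₀, hx₀S, hx₀t⟩ := ht
  obtain ⟨hx₀H, hx₀1, hx₀m1⟩ := (hSmem x₀).mp hx₀S
  congr 1
  ext w
  rw [Finset.mem_filter]
  constructor
  · rintro ⟨hwS, heq⟩
    rw [← heq]
    exact Finset.mem_filter.mpr ⟨hwS, Rel_refl w⟩
  · intro hwt
    rw [← hx₀t] at hwt
    have hwt' : w ∈ S ∧ Rel H x₀ w := Finset.mem_filter.mp hwt
    obtain ⟨hwS, hrel⟩ := hwt'
    obtain ⟨hwH, hw1, hwm1⟩ := (hSmem w).mp hwS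
    refine ⟨hwS, ?_⟩
    rw [← hx₀t]
    show S.filter (Rel H w) = S.filter (Rel H x₀)
    ext v
    constructor
    · intro hv
      obtain ⟨hvS, hrelwv⟩ := Finset.mem_filter.mp hv
      obtain ⟨hvH, hv1, hvm1⟩ := (hSmem v).mp hvS
      exact Finset.mem_filter.mpr ⟨hvS, Rel_trans hp2 hw1 hwm1 hv1 hvm1 hx₀H hwH hrel hrelwv⟩
    · intro hv
      obtain ⟨hvS, hrelxv⟩ := Finset.mem_filter.mp hv
      obtain ⟨hvH, hv1, hvm1⟩ := (hSmem v).mp hvS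
      exact Finset.mem_filter.mpr ⟨hvS, Rel_trans hp2 hx₀1 hx₀m1 hv1 hvm1 hwH hx₀H (Rel_symm hrel) hrelxv⟩

lemma endgame_one (p h o a P τ : ℕ) (h168 : 168 ≤ h) (h4p : 4*p + 4 ≤ h)
    (ho : 1 ≤ o) (hf4 : 4*o ≤ P) (ho2p : o = 1 → P ≤ 2*p)
    (hf1 : τ + 2*o = P) (hn : P = h ∨ 2*P = h) (hsum : τ + 2 = h) : False := by
  rcases hn with hn | hn
  · have ho1 : o = 1 := by omega
    have := ho2p ho1
    omega
  · omega

lemma endgame_two (p h : ℕ) (h168 : 168 ≤ h) (h4p : 4*p + 4 ≤ h)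
    (o₁ a₁ P₁ τ₁ o₂ a₂ P₂ τ₂ : ℕ)
    (ho₁ : 1 ≤ o₁) (ha₁ : 4 ≤ a₁) (he₁ : 2 ∣ a₁)
    (hP₁ : P₁ = o₁ * a₁) (ho2p₁ : o₁ = 1 → P₁ ≤ 2*p)
    (hf₁ : τ₁ + 2*o₁ = P₁) (hn₁ : P₁ = h ∨ 2*P₁ = h)
    (ho₂ : 1 ≤ o₂) (ha₂ : 4 ≤ a₂) (he₂ : 2 ∣ a₂)
    (hP₂ : P₂ = o₂ * a₂) (ho2p₂ : o₂ = 1 → P₂ ≤ 2*p)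
    (hf₂ : τ₂ + 2*o₂ = P₂) (hn₂ : P₂ = h ∨ 2*P₂ = h)
    (hsum : τ₁ + τ₂ + 2 = h) : False := by
  have hb₁ : 4*o₁ ≤ P₁ := by
    rw [hP₁, mul_comm]
    exact Nat.mul_le_mul (le_refl o₁) ha₁
  have hb₂ : 4*o₂ ≤ P₂ := by
    rw [hP₂, mul_comm]
    exact Nat.mul_le_mul (le_refl o₂) ha₂
  rcases hn₁ with hn₁ | hn₁ <;> rcases hn₂ with hn₂ | hn₂
  · omega
  · -- P₁ = h, 2P₂ = h : 4o₁ + 4o₂ = h + 4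
    have key : 4*o₁ + 4*o₂ = h + 4 := by omega
    have ha₁cases : a₁ = 4 ∨ a₁ = 6 ∨ 8 ≤ a₁ := by omega
    rcases ha₁cases with h4 | h6 | h8
    · have : P₁ = 4*o₁ := by rw [hP₁, h4]; ring
      have ho₂1 : o₂ = 1 := by omega
      have := ho2p₂ ho₂1
      omega
    · have hP₁6 : P₁ = 6*o₁ := by rw [hP₁, h6]; ring
      have ha₂cases : a₂ = 4 ∨ a₂ = 6 ∨ 8 ≤ a₂ := by omega
      rcases ha₂cases with h4' | h6' | h8'
      · have : P₂ = 4*o₂ := by rw [hP₂, h4']; ring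
        omega
      · have : P₂ = 6*o₂ := by rw [hP₂, h6']; ring
        omega
      · have : 8*o₂ ≤ P₂ := by
          rw [hP₂, mul_comm]
          exact Nat.mul_le_mul (le_refl o₂) h8'
        omega
    · have : 8*o₁ ≤ P₁ := by
        rw [hP₁, mul_comm]
        exact Nat.mul_le_mul (le_refl o₁) h8
      omega
  · -- 2P₁ = h, P₂ = h : symmetric
    have key : 4*o₂ + 4*o₁ = h + 4 := by omega
    have ha₂cases : a₂ = 4 ∨ a₂ = 6 ∨ 8 ≤ a₂ := by omega
    rcases ha₂cases with h4 | h6 | h8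
    · have : P₂ = 4*o₂ := by rw [hP₂, h4]; ring
      have ho₁1 : o₁ = 1 := by omega
      have := ho2p₁ ho₁1
      omega
    · have hP₂6 : P₂ = 6*o₂ := by rw [hP₂, h6]; ring
      have ha₁cases : a₁ = 4 ∨ a₁ = 6 ∨ 8 ≤ a₁ := by omega
      rcases ha₁cases with h4' | h6' | h8'
      · have : P₁ = 4*o₁ := by rw [hP₁, h4']; ring
        omega
      · have : P₁ = 6*o₁ := by rw [hP₁, h6']; ring
        omega
      · have : 8*o₁ ≤ P₁ := by
          rw [hP₁, mul_comm]
          exact Nat.mul_le_mul (le_refl o₁) h8'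
        omega
    · have : 8*o₂ ≤ P₂ := by
        rw [hP₂, mul_comm]
        exact Nat.mul_le_mul (le_refl o₂) h8
      omega
  · omega

end SLaux2

namespace SLaux2

lemma endgame_sorted (p h : ℕ) (h168 : 168 ≤ h) (h4p : 4*p + 4 ≤ h)
    (o₁ a₁ P₁ τ₁ o₂ a₂ P₂ τ₂ o₃ a₃ P₃ τ₃ : ℕ)
    (ho₁ : 1 ≤ o₁) (ha₁ : 4 ≤ a₁) (he₁ : 2 ∣ a₁) (hP₁ : P₁ = o₁ * a₁)
    (ho2p₁ : o₁ = 1 → P₁ ≤ 2*p) (hf₁ : τ₁ + 2*o₁ = P₁) (hn₁ : 2*P₁ = h)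
    (ho₂ : 1 ≤ o₂) (ha₂ : 4 ≤ a₂) (he₂ : 2 ∣ a₂) (hP₂ : P₂ = o₂ * a₂)
    (ho2p₂ : o₂ = 1 → P₂ ≤ 2*p) (hf₂ : τ₂ + 2*o₂ = P₂) (hn₂ : 2*P₂ = h)
    (ho₃ : 1 ≤ o₃) (ha₃ : 4 ≤ a₃) (he₃ : 2 ∣ a₃) (hP₃ : P₃ = o₃ * a₃)
    (ho2p₃ : o₃ = 1 → P₃ ≤ 2*p) (hf₃ : τ₃ + 2*o₃ = P₃) (hn₃ : 2*P₃ = h)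
    (hs12 : a₁ ≤ a₂) (hs23 : a₂ ≤ a₃)
    (hsum : τ₁ + τ₂ + τ₃ + 2 = h) : False := by
  have ho21 : o₂ ≤ o₁ := by
    have h1 : o₂ * a₁ ≤ o₁ * a₁ := by
      calc o₂ * a₁ ≤ o₂ * a₂ := Nat.mul_le_mul (le_refl o₂) hs12
      _ = P₂ := hP₂.symm
      _ = P₁ := by omega
      _ = o₁ * a₁ := hP₁
    exact Nat.le_of_mul_le_mul_right h1 (by omega)
  have ho32 : o₃ ≤ o₂ := by
    have h1 : o₃ * a₂ ≤ o₂ * a₂ := by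
      calc o₃ * a₂ ≤ o₃ * a₃ := Nat.mul_le_mul (le_refl o₃) hs23
      _ = P₃ := hP₃.symm
      _ = P₂ := by omega
      _ = o₂ * a₂ := hP₂
    exact Nat.le_of_mul_le_mul_right h1 (by omega)
  have key : 4*(o₁+o₂+o₃) = h + 4 := by omega
  have ha₁4 : a₁ = 4 := by
    by_contra hne
    have h6 : 6 ≤ a₁ := by omega
    have hb₁ : 6*o₁ ≤ P₁ := by
      rw [hP₁, mul_comm]
      exact Nat.mul_le_mul (le_refl o₁) h6
    have hb₂ : 6*o₂ ≤ P₂ := by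
      rw [hP₂, mul_comm]
      exact Nat.mul_le_mul (le_refl o₂) (by omega)
    have hb₃ : 6*o₃ ≤ P₃ := by
      rw [hP₃, mul_comm]
      exact Nat.mul_le_mul (le_refl o₃) (by omega)
    omega
  have hP₁4 : P₁ = o₁ * 4 := by rw [hP₁, ha₁4]
  have ha₂cases : a₂ = 4 ∨ a₂ = 6 ∨ 8 ≤ a₂ := by omega
  rcases ha₂cases with h4 | h6 | h8
  · have hP₂4 : P₂ = o₂ * 4 := by rw [hP₂, h4]
    have ho₃1 : o₃ = 1 := by omega
    have := ho2p₃ ho₃1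
    omega
  · have hP₂6 : P₂ = o₂ * 6 := by rw [hP₂, h6]
    have ha₃cases : a₃ = 4 ∨ a₃ = 6 ∨ a₃ = 8 ∨ a₃ = 10 ∨ 12 ≤ a₃ := by omega
    rcases ha₃cases with h' | h' | h' | h' | h'
    · omega
    · have : P₃ = o₃ * 6 := by rw [hP₃, h']
      omega
    · have : P₃ = o₃ * 8 := by rw [hP₃, h']
      omega
    · have : P₃ = o₃ * 10 := by rw [hP₃, h']
      omega
    · have : 12*o₃ ≤ P₃ := by
        rw [hP₃, mul_comm]
        exact Nat.mul_le_mul (le_refl o₃) h'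
      omega
  · have hb₂ : 8*o₂ ≤ P₂ := by
      rw [hP₂, mul_comm]
      exact Nat.mul_le_mul (le_refl o₂) h8
    omega

lemma endgame_three (p h : ℕ) (h168 : 168 ≤ h) (h4p : 4*p + 4 ≤ h)
    (o₁ a₁ P₁ τ₁ o₂ a₂ P₂ τ₂ o₃ a₃ P₃ τ₃ : ℕ)
    (ho₁ : 1 ≤ o₁) (ha₁ : 4 ≤ a₁) (he₁ : 2 ∣ a₁) (hP₁ : P₁ = o₁ * a₁)
    (ho2p₁ : o₁ = 1 → P₁ ≤ 2*p) (hf₁ : τ₁ + 2*o₁ = P₁) (hn₁ : P₁ = h ∨ 2*P₁ = h)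
    (ho₂ : 1 ≤ o₂) (ha₂ : 4 ≤ a₂) (he₂ : 2 ∣ a₂) (hP₂ : P₂ = o₂ * a₂)
    (ho2p₂ : o₂ = 1 → P₂ ≤ 2*p) (hf₂ : τ₂ + 2*o₂ = P₂) (hn₂ : P₂ = h ∨ 2*P₂ = h)
    (ho₃ : 1 ≤ o₃) (ha₃ : 4 ≤ a₃) (he₃ : 2 ∣ a₃) (hP₃ : P₃ = o₃ * a₃)
    (ho2p₃ : o₃ = 1 → P₃ ≤ 2*p) (hf₃ : τ₃ + 2*o₃ = P₃) (hn₃ : P₃ = h ∨ 2*P₃ = h)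
    (hsum : τ₁ + τ₂ + τ₃ + 2 = h) : False := by
  have hb₁ : 4*o₁ ≤ P₁ := by
    rw [hP₁, mul_comm]
    exact Nat.mul_le_mul (le_refl o₁) ha₁
  have hb₂ : 4*o₂ ≤ P₂ := by
    rw [hP₂, mul_comm]
    exact Nat.mul_le_mul (le_refl o₂) ha₂
  have hb₃ : 4*o₃ ≤ P₃ := by
    rw [hP₃, mul_comm]
    exact Nat.mul_le_mul (le_refl o₃) ha₃
  rcases hn₁ with hn₁ | hn₁
  · rcases hn₂ with hn₂ | hn₂ <;> rcases hn₃ with hn₃ | hn₃ <;> omega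
  · rcases hn₂ with hn₂ | hn₂
    · rcases hn₃ with hn₃ | hn₃ <;> omega
    · rcases hn₃ with hn₃ | hn₃
      · omega
      · -- all halves, sort by a
        rcases le_total a₁ a₂ with h12 | h21
        · rcases le_total a₂ a₃ with h23 | h32
          · exact endgame_sorted p h h168 h4p o₁ a₁ P₁ τ₁ o₂ a₂ P₂ τ₂ o₃ a₃ P₃ τ₃
              ho₁ ha₁ he₁ hP₁ ho2p₁ hf₁ hn₁ ho₂ ha₂ he₂ hP₂ ho2p₂ hf₂ hn₂
              ho₃ ha₃ he₃ hP₃ ho2p₃ hf₃ hn₃ h12 h23 (by omega)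
          · rcases le_total a₁ a₃ with h13 | h31
            · exact endgame_sorted p h h168 h4p o₁ a₁ P₁ τ₁ o₃ a₃ P₃ τ₃ o₂ a₂ P₂ τ₂
                ho₁ ha₁ he₁ hP₁ ho2p₁ hf₁ hn₁ ho₃ ha₃ he₃ hP₃ ho2p₃ hf₃ hn₃
                ho₂ ha₂ he₂ hP₂ ho2p₂ hf₂ hn₂ h13 h32 (by omega)
            · exact endgame_sorted p h h168 h4p o₃ a₃ P₃ τ₃ o₁ a₁ P₁ τ₁ o₂ a₂ P₂ τ₂
                ho₃ ha₃ he₃ hP₃ ho2p₃ hf₃ hn₃ ho₁ ha₁ he₁ hP₁ ho2p₁ hf₁ hn₁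
                ho₂ ha₂ he₂ hP₂ ho2p₂ hf₂ hn₂ h31 h12 (by omega)
        · rcases le_total a₁ a₃ with h13 | h31
          · exact endgame_sorted p h h168 h4p o₂ a₂ P₂ τ₂ o₁ a₁ P₁ τ₁ o₃ a₃ P₃ τ₃
              ho₂ ha₂ he₂ hP₂ ho2p₂ hf₂ hn₂ ho₁ ha₁ he₁ hP₁ ho2p₁ hf₁ hn₁
              ho₃ ha₃ he₃ hP₃ ho2p₃ hf₃ hn₃ h21 h13 (by omega)
          · rcases le_total a₂ a₃ with h23 | h32
            · exact endgame_sorted p h h168 h4p o₂ a₂ P₂ τ₂ o₃ a₃ P₃ τ₃ o₁ a₁ P₁ τ₁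
                ho₂ ha₂ he₂ hP₂ ho2p₂ hf₂ hn₂ ho₃ ha₃ he₃ hP₃ ho2p₃ hf₃ hn₃
                ho₁ ha₁ he₁ hP₁ ho2p₁ hf₁ hn₁ h23 h31 (by omega)
            · exact endgame_sorted p h h168 h4p o₃ a₃ P₃ τ₃ o₂ a₂ P₂ τ₂ o₁ a₁ P₁ τ₁
                ho₃ ha₃ he₃ hP₃ ho2p₃ hf₃ hn₃ ho₂ ha₂ he₂ hP₂ ho2p₂ hf₂ hn₂
                ho₁ ha₁ he₁ hP₁ ho2p₁ hf₁ hn₁ h32 h21 (by omega)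

end SLaux2

namespace SLaux2
section Final
variable {H : Subgroup (G p)}

open scoped Classical in
lemma case_two (hp13 : 13 ≤ p)
    (htrans : ∀ u v : Fin 2 → F p, u ≠ 0 → v ≠ 0 →
      ∃ h ∈ H, Matrix.mulVec (h : Matrix (Fin 2) (Fin 2) (F p)) u = v)
    (hfree : ∀ x ∈ H, Matrix.mulVec ((x : G p) : Matrix (Fin 2) (Fin 2) (F p)) (e1 p) = e1 p → x = 1) :
    False := by
  classical
  have hp2 : (2 : F p) ≠ 0 := two_ne_zero' hp13
  have hneg : (-1 : G p) ∈ H := neg_one_mem htrans hfree hp2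
  have hcard : Nat.card H = p^2 - 1 := card_H htrans hfree hp2
  set h' := Nat.card H with hh'
  have hpsq : 169 ≤ p^2 := by nlinarith
  have h168 : 168 ≤ h' := by omega
  have h4p : 4*p + 4 ≤ h' := by
    have h5 : 4*p + 5 ≤ p^2 := by nlinarith
    omega
  set S : Finset (G p) := Finset.univ.filter (fun w : G p => w ∈ H ∧ w ≠ 1 ∧ w ≠ -1) with hS
  set T := S.image (fun x => S.filter (Rel H x)) with hT
  have hScard : S.card = h' - 2 := by
    have hSsub : S = (Finset.univ.filter (· ∈ H)) \ {1, -1} := by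
      ext w
      rw [hS, Finset.mem_filter, Finset.mem_sdiff, Finset.mem_filter]
      simp only [Finset.mem_insert, Finset.mem_singleton, Finset.mem_univ, true_and]
      tauto
    rw [hSsub, Finset.card_sdiff_of_subset]
    · rw [card_filter_subgroup H]
      congr 1
      rw [Finset.card_insert_of_notMem (by simp; exact fun h => (neg_one_ne_one hp2) h.symm),
        Finset.card_singleton]
    · intro w hw
      simp only [Finset.mem_insert, Finset.mem_singleton] at hw
      rw [Finset.mem_filter]
      refine ⟨Finset.mem_univ _, ?_⟩
      rcases hw with rfl | rfl
      · exact H.one_mem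
      · exact hneg
  have hsum : S.card = ∑ t ∈ T, t.card := class_equation hp2
  have hpack : ∀ t ∈ T, ∃ o a P : ℕ, 1 ≤ o ∧ 4 ≤ a ∧ 2 ∣ a ∧ P = o*a ∧
      (o = 1 → P ≤ 2*p) ∧ (t.card + 2*o = P) ∧ (P = h' ∨ 2*P = h') := by
    intro t ht
    rw [hT, Finset.mem_image] at ht
    obtain ⟨x₀, hx₀S, hx₀t⟩ := ht
    rw [hS, Finset.mem_filter] at hx₀S
    obtain ⟨_, hx₀H, hx₀1, hx₀m1⟩ := hx₀S
    set a := Nat.card (Ax H x₀) with ha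
    set n := Nat.card (Subgroup.normalizer (Ax H x₀ : Set (G p)) ⊓ H : Subgroup (G p)) with hn
    have hclass : t.card * n = h' * (a - 2) := by
      rw [← hx₀t]
      exact class_card htrans hfree hp2 hx₀H hx₀1 hx₀m1
    have hdich : n = a ∨ n = 2*a := card_N_dichotomy htrans hfree hp2 hx₀H hx₀1 hx₀m1
    have ha4 : 4 ≤ a := four_le_card_Ax hp2 hx₀H hx₀1 hx₀m1 hneg
    have heva : 2 ∣ a := two_dvd_card_Ax hp2 hneg
    have hale : a ≤ 2*p := card_Ax_le hp2 hx₀1 hx₀m1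
    have hnpos : 0 < n := by
      haveI : Nonempty (Subgroup.normalizer (Ax H x₀ : Set (G p)) ⊓ H : Subgroup (G p)) :=
        ⟨⟨1, Subgroup.one_mem _⟩⟩
      exact Nat.card_pos
    have hndvd : n ∣ h' := Subgroup.card_dvd_of_le inf_le_right
    obtain ⟨o, hoeq⟩ := hndvd
    have ho1 : 1 ≤ o := by
      rcases Nat.eq_zero_or_pos o with h0 | h0
      · rw [h0, Nat.mul_zero] at hoeq
        omega
      · exact h0
    refine ⟨o, a, o*a, ho1, ha4, heva, rfl, ?_, ?_, ?_⟩
    · intro ho'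
      rw [ho', one_mul]
      exact hale
    · have htc : t.card = o*(a-2) := by
        apply Nat.eq_of_mul_eq_mul_right hnpos
        rw [hclass, hoeq]
        ring
      rw [htc]
      have : o*(a-2) + 2*o = o*((a-2)+2) := by ring
      rw [this]
      congr 1
      omega
    · rcases hdich with h' | h'
      · left
        rw [hoeq, h']
        ring
      · right
        rw [hoeq, h']
        ring
  have hbound : ∀ t ∈ T, h' ≤ 4 * t.card := by
    intro t ht
    obtain ⟨o, a, P, ho1, ha4, _, hP, _, hf1, hnn⟩ := hpack t ht
    have hb : 4*o ≤ P := by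
      rw [hP, mul_comm]
      exact Nat.mul_le_mul (le_refl o) ha4
    rcases hnn with h' | h' <;> omega
  have hT3 : T.card ≤ 3 := by
    by_contra hcon
    push_neg at hcon
    have h1 : ∑ _t ∈ T, h' ≤ ∑ t ∈ T, 4 * t.card := Finset.sum_le_sum hbound
    rw [Finset.sum_const, smul_eq_mul, ← Finset.mul_sum, ← hsum, hScard] at h1
    have h2 : 4 * h' ≤ T.card * h' := Nat.mul_le_mul_right h' (by omega)
    omega
  interval_cases hTc : T.card
  · rw [Finset.card_eq_zero] at hTc
    rw [hTc, Finset.sum_empty] at hsum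
    omega
  · obtain ⟨t, hTeq⟩ := Finset.card_eq_one.mp hTc
    have htT : t ∈ T := by rw [hTeq]; exact Finset.mem_singleton_self t
    rw [hTeq, Finset.sum_singleton] at hsum
    obtain ⟨o, a, P, ho1, ha4, hev, hP, ho2p, hf1, hnn⟩ := hpack t htT
    have hb : 4*o ≤ P := by
      rw [hP, mul_comm]
      exact Nat.mul_le_mul (le_refl o) ha4
    exact endgame_one p h' o a P t.card h168 h4p ho1 hb ho2p hf1 hnn (by omega)
  · obtain ⟨t₁, t₂, hne, hTeq⟩ := Finset.card_eq_two.mp hTc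
    have ht₁ : t₁ ∈ T := by rw [hTeq]; simp
    have ht₂ : t₂ ∈ T := by rw [hTeq]; simp
    rw [hTeq, Finset.sum_insert (by simp [hne]), Finset.sum_singleton] at hsum
    obtain ⟨o₁, a₁, P₁, ho₁, ha₁, he₁, hP₁, ho2p₁, hf₁, hn₁⟩ := hpack t₁ ht₁
    obtain ⟨o₂, a₂, P₂, ho₂, ha₂, he₂, hP₂, ho2p₂, hf₂, hn₂⟩ := hpack t₂ ht₂
    exact endgame_two p h' h168 h4p o₁ a₁ P₁ t₁.card o₂ a₂ P₂ t₂.card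
      ho₁ ha₁ he₁ hP₁ ho2p₁ hf₁ hn₁ ho₂ ha₂ he₂ hP₂ ho2p₂ hf₂ hn₂ (by omega)
  · obtain ⟨t₁, t₂, t₃, h12, h13, h23, hTeq⟩ := Finset.card_eq_three.mp hTc
    have ht₁ : t₁ ∈ T := by rw [hTeq]; simp
    have ht₂ : t₂ ∈ T := by rw [hTeq]; simp
    have ht₃ : t₃ ∈ T := by rw [hTeq]; simp
    rw [hTeq, Finset.sum_insert (by simp [h12, h13]),
      Finset.sum_insert (by simp [h23]), Finset.sum_singleton] at hsum
    obtain ⟨o₁, a₁, P₁, ho₁, ha₁, he₁, hP₁, ho2p₁, hf₁, hn₁⟩ := hpack t₁ ht₁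
    obtain ⟨o₂, a₂, P₂, ho₂, ha₂, he₂, hP₂, ho2p₂, hf₂, hn₂⟩ := hpack t₂ ht₂
    obtain ⟨o₃, a₃, P₃, ho₃, ha₃, he₃, hP₃, ho2p₃, hf₃, hn₃⟩ := hpack t₃ ht₃
    exact endgame_three p h' h168 h4p o₁ a₁ P₁ t₁.card o₂ a₂ P₂ t₂.card o₃ a₃ P₃ t₃.card
      ho₁ ha₁ he₁ hP₁ ho2p₁ hf₁ hn₁ ho₂ ha₂ he₂ hP₂ ho2p₂ hf₂ hn₂
      ho₃ ha₃ he₃ hP₃ ho2p₃ hf₃ hn₃ (by omega)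

end Final
end SLaux2

/-- for a prime `p ≥ 13`, a subgroup `H ≤ SL₂(𝔽_p)` acting transitively on the
nonzero vectors of `𝔽_p²` must be all of `SL₂(𝔽_p)`. -/
theorem transitive_subgroup_sl2_large_p (p : ℕ) (hp : p.Prime) (hp13 : 13 ≤ p)
    (H : Subgroup (Matrix.SpecialLinearGroup (Fin 2) (ZMod p)))
    (htrans : ∀ u v : Fin 2 → ZMod p, u ≠ 0 → v ≠ 0 →
      ∃ h ∈ H, Matrix.mulVec (h : Matrix (Fin 2) (Fin 2) (ZMod p)) u = v) :
    H = ⊤ := by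
  haveI : Fact p.Prime := ⟨hp⟩
  have hp2 : (2 : F p) ≠ 0 := SLaux2.two_ne_zero' hp13
  by_cases hex : ∃ x ∈ H, x ≠ 1 ∧
      Matrix.mulVec ((x : G p) : Matrix (Fin 2) (Fin 2) (F p)) (SLaux2.e1 p) = SLaux2.e1 p
  · exact SLaux2.case_one htrans hp2 hex
  · push_neg at hex
    have hfree : ∀ x ∈ H,
        Matrix.mulVec ((x : G p) : Matrix (Fin 2) (Fin 2) (F p)) (SLaux2.e1 p) = SLaux2.e1 p
          → x = 1 := by
      intro x hx hfix
      by_contra hne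
      exact (hex x hx hne) hfix
    exact absurd (SLaux2.case_two hp13 htrans hfree) id
end

section
/- Let H be a subgroup of SL₂(𝔽₃) that acts transitively on the set of nonzero vectors of 𝔽₃² (under matrix-vector multiplication). Then either H = SL₂(𝔽₃) or H is isomorphic to the quaternion group Q₈ of order 8. -/
set_option maxRecDepth 100000
set_option synthInstance.maxHeartbeats 1000000

private abbrev SL23 := Matrix.SpecialLinearGroup (Fin 2) (ZMod 3)

private instance : DecidableEq SL23 := fun a b =>
  decidable_of_iff (a.1 = b.1) Subtype.ext_iff.symm

/-- The (unique) Sylow 2-subgroup of SL₂(𝔽₃): the set of elements of order dividing 8. -/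
private def Qmat : Subgroup SL23 where
  carrier := {g | g ^ 8 = 1}
  one_mem' := by show (1:SL23) ^ 8 = 1; decide
  mul_mem' {a b} ha hb := by
    revert ha hb; show a ^ 8 = 1 → b ^ 8 = 1 → (a*b) ^ 8 = 1
    revert a b; decide
  inv_mem' {a} ha := by
    revert ha; show a ^ 8 = 1 → a⁻¹ ^ 8 = 1
    revert a; decide

private instance : DecidablePred (· ∈ Qmat) := fun g => decidable_of_iff (g ^ 8 = 1) Iff.rfl

private lemma cardQ : Fintype.card Qmat = 8 := by decide

private def Imat : SL23 := ⟨!![0,-1;1,0], by decide⟩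
private def Jmat : SL23 := ⟨!![1,1;1,-1], by decide⟩

private def f : QuaternionGroup 2 → SL23
  | .a i => Imat ^ i.val
  | .xa i => Jmat * Imat ^ i.val

private lemma f_mem : ∀ x, f x ∈ Qmat := by decide
private lemma f_mul : ∀ x y, f (x * y) = f x * f y := by decide
private lemma f_inj : ∀ x y, f x = f y → x = y := by decide

private def toQ : QuaternionGroup 2 →* Qmat where
  toFun x := ⟨f x, f_mem x⟩
  map_one' := Subtype.ext (by decide)
  map_mul' x y := Subtype.ext (f_mul x y)

private lemma toQ_bij : Function.Bijective toQ := by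
  rw [Fintype.bijective_iff_injective_and_card]
  refine ⟨fun x y h => f_inj x y (congrArg Subtype.val h), ?_⟩
  rw [cardQ, QuaternionGroup.card]

private noncomputable def equivQ : QuaternionGroup 2 ≃* Qmat :=
  MulEquiv.ofBijective toQ toQ_bij

private instance : MulAction SL23 (Fin 2 → ZMod 3) where
  smul g v := Matrix.mulVec g.1 v
  one_smul v := show Matrix.mulVec (1:SL23).1 v = v by
    simp [Matrix.one_mulVec]
  mul_smul g h v :=
    show Matrix.mulVec (g*h).1 v = Matrix.mulVec g.1 (Matrix.mulVec h.1 v) by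
    simp only [Matrix.SpecialLinearGroup.coe_mul, Matrix.mulVec_mulVec]

private def e₁ : Fin 2 → ZMod 3 := ![1, 0]

private lemma cardSL : Nat.card SL23 = 24 := by
  rw [Nat.card_eq_fintype_card]; decide

/-- a subgroup `H ≤ SL₂(𝔽₃)` acting transitively on the nonzero vectors of `𝔽₃²`
is either all of `SL₂(𝔽₃)` or isomorphic to the quaternion group `Q₈` of order 8. -/
theorem transitive_subgroup_sl2_three
    (H : Subgroup (Matrix.SpecialLinearGroup (Fin 2) (ZMod 3)))
    (htrans : ∀ u v : Fin 2 → ZMod 3, u ≠ 0 → v ≠ 0 →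
      ∃ h ∈ H, Matrix.mulVec (h : Matrix (Fin 2) (Fin 2) (ZMod 3)) u = v) :
    H = ⊤ ∨ Nonempty (H ≃* QuaternionGroup 2) := by
  have horb : MulAction.orbit H e₁ = {v | v ≠ 0} := by
    ext v
    constructor
    · rintro ⟨⟨h, hh⟩, rfl⟩
      show Matrix.mulVec h.1 e₁ ≠ 0
      intro h0
      have key : Matrix.mulVec (h⁻¹ * h).1 e₁ = Matrix.mulVec h⁻¹.1 0 := by
        rw [← h0, Matrix.SpecialLinearGroup.coe_mul, ← Matrix.mulVec_mulVec]
      rw [inv_mul_cancel, Matrix.mulVec_zero] at key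
      simp only [Matrix.SpecialLinearGroup.coe_one, Matrix.one_mulVec] at key
      exact (by decide : e₁ ≠ 0) key
    · intro hv
      obtain ⟨h, hH, hmul⟩ := htrans e₁ v (by decide) hv
      exact ⟨⟨h, hH⟩, hmul⟩
  have hcard8 : Nat.card (MulAction.orbit H e₁) = 8 := by
    rw [horb, Nat.card_eq_fintype_card]; decide
  have hdvd8 : (8:ℕ) ∣ Nat.card H := by
    have hq := Nat.card_congr (MulAction.orbitProdStabilizerEquivGroup H e₁)
    rw [Nat.card_prod, hcard8] at hq
    exact ⟨_, hq.symm⟩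
  have hdvd24 : Nat.card H ∣ 24 := by
    have := Subgroup.card_subgroup_dvd_card H
    rwa [cardSL] at this
  have hcases : Nat.card H = 8 ∨ Nat.card H = 24 := by
    obtain ⟨k, hk⟩ := hdvd8
    have hk3 : k ∣ 3 := by
      have h83 : 8 * k ∣ 8 * 3 := by rw [← hk]; exact hdvd24
      exact (mul_dvd_mul_iff_left (by norm_num : (8:ℕ) ≠ 0)).mp h83
    rcases (Nat.prime_three.eq_one_or_self_of_dvd k hk3) with h | h <;> omega
  rcases hcases with h8 | h24
  · right
    have hle : H ≤ Qmat := by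
      intro g hg
      have hpow : (⟨g, hg⟩ : H) ^ 8 = 1 := by rw [← h8]; exact pow_card_eq_one'
      have : g ^ 8 = 1 := by
        have := congrArg Subtype.val hpow
        simpa using this
      exact this
    have hQ : H = Qmat := Subgroup.eq_of_le_of_card_ge hle
      (by rw [h8, Nat.card_eq_fintype_card, cardQ])
    exact ⟨(MulEquiv.subgroupCongr hQ).trans equivQ.symm⟩
  · left
    exact Subgroup.eq_top_of_card_eq H (by rw [h24, cardSL])
end
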